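/- arXiv:2105.09748 — 6 statements merged into one kernel-verified Lean document; each statement's English description precedes it below -/
import Mathlib

section
/- Fix an integer k ≥ 1, a CDF F, and CDFs F₍₁₎,…,F₍ₖ₎ satisfying (1/k) Σ_{r=1}^{k} F₍ᵣ₎(t) = F(t) for all t. For p ∈ [0,1] define, with conventions F₍₀₎ = F₍₁₎ and F₍ₖ₊₁₎ = F₍ₖ₎, the fraction-of-neighbor-ranking CDFs F_[r] = ((1 − p)/2) F₍ᵣ₋₁₎ + p F₍ᵣ₎ + ((1 − p)/2) F₍ᵣ₊₁₎ for r = 1,…,k. Then (1/k) Σ_{r=1}^{k} F_[r](t) = F(t) for all t, i.e., the fraction of neighbor ranking model is a consistent ranking model. -/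
open Finset

/-!
Each summand `F₍ᵣ₎` receives total weight `(1 - p)/2 + p + (1 - p)/2 = 1` from the mixtures
`F_[r-1], F_[r], F_[r+1]`; the only defect is at the two ends, where the neighbours `F₍₀₎` and
`F₍ₖ₊₁₎` fall outside the range, and the conventions `F₍₀₎ = F₍₁₎`, `F₍ₖ₊₁₎ = F₍ₖ₎` repair it.
-/

theorem sum_Icc_pred_add_succ {M : Type*} [AddCommGroup M] (f : ℕ → M) (k : ℕ) :
    ∑ r ∈ Icc 1 k, (f (r - 1) + f (r + 1))
      = 2 • ∑ r ∈ Icc 1 k, f r + (f 0 - f 1) + (f (k + 1) - f k) := by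
  induction k with
  | zero => simp
  | succ k ih =>
    rw [sum_Icc_succ_top (by omega), sum_Icc_succ_top (by omega), ih, Nat.add_sub_cancel]
    abel

theorem sum_Icc_pred_add_succ_of_reflect {M : Type*} [AddCommGroup M] (f : ℕ → M) (k : ℕ)
    (h0 : f 0 = f 1) (hk : f (k + 1) = f k) :
    ∑ r ∈ Icc 1 k, (f (r - 1) + f (r + 1)) = 2 • ∑ r ∈ Icc 1 k, f r := by
  rw [sum_Icc_pred_add_succ, h0, hk, sub_self, sub_self, add_zero, add_zero]

theorem sum_Icc_neighbor_mix_of_reflect {R : Type*} [CommRing R] (f : ℕ → R) (k : ℕ)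
    (h0 : f 0 = f 1) (hk : f (k + 1) = f k) (a b : R) :
    ∑ r ∈ Icc 1 k, (a * f (r - 1) + b * f r + a * f (r + 1))
      = (2 * a + b) * ∑ r ∈ Icc 1 k, f r := by
  have hpair := sum_Icc_pred_add_succ_of_reflect f k h0 hk
  rw [nsmul_eq_mul, Nat.cast_ofNat] at hpair
  calc ∑ r ∈ Icc 1 k, (a * f (r - 1) + b * f r + a * f (r + 1))
      = a * ∑ r ∈ Icc 1 k, (f (r - 1) + f (r + 1)) + b * ∑ r ∈ Icc 1 k, f r := by
        rw [mul_sum, mul_sum, ← sum_add_distrib]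
        exact sum_congr rfl fun r _ => by ring
    _ = (2 * a + b) * ∑ r ∈ Icc 1 k, f r := by rw [hpair]; ring

theorem fraction_of_neighbor_ranking_consistent_general
    (k : ℕ)
    (F : ℝ → ℝ) (Fos : ℕ → ℝ → ℝ)
    (hcons : ∀ t, (1 / (k : ℝ)) * ∑ r ∈ Finset.Icc 1 k, Fos r t = F t)
    (h0 : ∀ t, Fos 0 t = Fos 1 t) (hk1 : ∀ t, Fos (k + 1) t = Fos k t)
    (p : ℝ)
    (Fb : ℕ → ℝ → ℝ)
    (hFb : ∀ r ∈ Finset.Icc 1 k, ∀ t,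
      Fb r t = ((1 - p) / 2) * Fos (r - 1) t + p * Fos r t + ((1 - p) / 2) * Fos (r + 1) t) :
    ∀ t, (1 / (k : ℝ)) * ∑ r ∈ Finset.Icc 1 k, Fb r t = F t := by
  intro t
  have hmix := sum_Icc_neighbor_mix_of_reflect (Fos · t) k (h0 t) (hk1 t) ((1 - p) / 2) p
  rw [← hcons t, sum_congr rfl fun r hr => hFb r hr t, hmix]
  ring

/-- Fix an integer `k ≥ 1`, a CDF `F`, and CDFs `F₍₁₎, …, F₍ₖ₎` satisfying
`(1/k) ∑_{r=1}^{k} F₍ᵣ₎ t = F t` for all `t`.  For `p ∈ [0,1]` define, with the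
conventions `F₍₀₎ = F₍₁₎` and `F₍ₖ₊₁₎ = F₍ₖ₎`, the fraction-of-neighbor-ranking CDFs
`F_[r] = ((1 - p)/2) F₍ᵣ₋₁₎ + p F₍ᵣ₎ + ((1 - p)/2) F₍ᵣ₊₁₎` for `r = 1, …, k`.
Then `(1/k) ∑_{r=1}^{k} F_[r] t = F t` for all `t`, i.e. the fraction of neighbor
ranking model is a consistent ranking model. -/
theorem fraction_of_neighbor_ranking_consistent
    (k : ℕ) (hk : 1 ≤ k)
    (F : ℝ → ℝ) (Fos : ℕ → ℝ → ℝ)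
    (hcons : ∀ t, (1 / (k : ℝ)) * ∑ r ∈ Finset.Icc 1 k, Fos r t = F t)
    (h0 : ∀ t, Fos 0 t = Fos 1 t) (hk1 : ∀ t, Fos (k + 1) t = Fos k t)
    (p : ℝ) (hp : p ∈ Set.Icc (0 : ℝ) 1)
    (Fb : ℕ → ℝ → ℝ)
    (hFb : ∀ r ∈ Finset.Icc 1 k, ∀ t,
      Fb r t = ((1 - p) / 2) * Fos (r - 1) t + p * Fos r t + ((1 - p) / 2) * Fos (r + 1) t) :
    ∀ t, (1 / (k : ℝ)) * ∑ r ∈ Finset.Icc 1 k, Fb r t = F t :=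
  fraction_of_neighbor_ranking_consistent_general k F Fos hcons h0 hk1 p Fb hFb
end

section
/- Fix an integer k ≥ 1, a time t > 0, and CDFs F_[1],…,F_[k] of nonnegative random variables with F_[r](t) > 0 for every r, and set F = (1/k) Σ_{r=1}^{k} F_[r]. Define K(t) = (∫₀ᵗ F(x)dx)/F(t), σ²(t) = (2∫₀ᵗ(t−x)F(x)dx)/F(t) − K(t)², and for each r, K_[r](t) = (∫₀ᵗ F_[r](x)dx)/F_[r](t) and σ²_[r](t) = (2∫₀ᵗ(t−x)F_[r](x)dx)/F_[r](t) − K_[r](t)². Then k σ²(t) F(t) = Σ_{r=1}^{k} F_[r](t) σ²_[r](t) + Σ_{r=1}^{k} F_[r](t) [K_[r](t) − K(t)]². -/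
open MeasureTheory ProbabilityTheory Finset

/-- Fix an integer `k ≥ 1`, a time `t > 0`, and CDFs `F_[1], …, F_[k]` of nonnegative
random variables with `F_[r] t > 0` for every `r`, and set
`F = (1/k) ∑_{r=1}^{k} F_[r]`.  Define `K t = (∫₀ᵗ F)/(F t)`,
`σ² t = (2∫₀ᵗ (t-x) F x dx)/(F t) - (K t)²`, and for each `r`,
`K_[r] t = (∫₀ᵗ F_[r])/(F_[r] t)` and
`σ²_[r] t = (2∫₀ᵗ (t-x) F_[r] x dx)/(F_[r] t) - (K_[r] t)²`.  Then
`k σ²(t) F(t) = ∑_{r=1}^{k} F_[r](t) σ²_[r](t) + ∑_{r=1}^{k} F_[r](t) (K_[r](t) - K(t))²`. -/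
theorem rss_variance_decomposition_identity
    (k : ℕ) (hk : 1 ≤ k) (t : ℝ) (ht : 0 < t)
    (μ : ℕ → Measure ℝ) [∀ r, IsProbabilityMeasure (μ r)]
    (hμnn : ∀ r ∈ Finset.Icc 1 k, μ r (Set.Iio 0) = 0)
    (Fr : ℕ → ℝ → ℝ) (hFr : ∀ r ∈ Finset.Icc 1 k, ∀ x, Fr r x = ProbabilityTheory.cdf (μ r) x)
    (hFrt : ∀ r ∈ Finset.Icc 1 k, 0 < Fr r t)
    (F : ℝ → ℝ) (hF : ∀ x, F x = (1 / (k : ℝ)) * ∑ r ∈ Finset.Icc 1 k, Fr r x)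
    (K σ2 : ℝ) (Kr σ2r : ℕ → ℝ)
    (hK : K = (∫ x in (0:ℝ)..t, F x) / F t)
    (hσ2 : σ2 = (2 * ∫ x in (0:ℝ)..t, (t - x) * F x) / F t - K ^ 2)
    (hKr : ∀ r ∈ Finset.Icc 1 k, Kr r = (∫ x in (0:ℝ)..t, Fr r x) / Fr r t)
    (hσ2r : ∀ r ∈ Finset.Icc 1 k,
      σ2r r = (2 * ∫ x in (0:ℝ)..t, (t - x) * Fr r x) / Fr r t - (Kr r) ^ 2) :
    (k : ℝ) * σ2 * F t
      = (∑ r ∈ Finset.Icc 1 k, Fr r t * σ2r r)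
        + ∑ r ∈ Finset.Icc 1 k, Fr r t * (Kr r - K) ^ 2 := by
  have hk0 : (k : ℝ) ≠ 0 := by
    have : (0:ℕ) < k := hk
    exact_mod_cast this.ne'
  have hint : ∀ r ∈ Finset.Icc 1 k, IntervalIntegrable (Fr r) volume 0 t := by
    intro r hr
    have hmono : Monotone (Fr r) := by
      have : Fr r = fun x => ProbabilityTheory.cdf (μ r) x := funext (hFr r hr)
      rw [this]
      exact (ProbabilityTheory.cdf (μ r)).mono
    exact hmono.intervalIntegrable
  have hint2 : ∀ r ∈ Finset.Icc 1 k,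
      IntervalIntegrable (fun x => (t - x) * Fr r x) volume 0 t := by
    intro r hr
    exact (hint r hr).continuousOn_mul (by fun_prop)
  have hFt : F t = (1 / (k:ℝ)) * ∑ r ∈ Finset.Icc 1 k, Fr r t := hF t
  have hFtpos : 0 < F t := by
    rw [hFt]
    apply mul_pos (by positivity)
    exact Finset.sum_pos (fun r hr => hFrt r hr) (Finset.nonempty_Icc.2 hk)
  have hFtne : F t ≠ 0 := hFtpos.ne'
  have hIF : (∫ x in (0:ℝ)..t, F x)
      = (1 / (k:ℝ)) * ∑ r ∈ Finset.Icc 1 k, ∫ x in (0:ℝ)..t, Fr r x := by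
    have h1 : (∫ x in (0:ℝ)..t, F x)
        = ∫ x in (0:ℝ)..t, (1/(k:ℝ)) * ∑ r ∈ Finset.Icc 1 k, Fr r x := by
      apply intervalIntegral.integral_congr
      intro x hx
      exact hF x
    rw [h1, intervalIntegral.integral_const_mul,
      intervalIntegral.integral_finset_sum (fun r hr => hint r hr)]
  have hIG : (∫ x in (0:ℝ)..t, (t - x) * F x)
      = (1 / (k:ℝ)) * ∑ r ∈ Finset.Icc 1 k, ∫ x in (0:ℝ)..t, (t - x) * Fr r x := by
    have h1 : (∫ x in (0:ℝ)..t, (t - x) * F x)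
        = ∫ x in (0:ℝ)..t, (1/(k:ℝ)) * ∑ r ∈ Finset.Icc 1 k, (t - x) * Fr r x := by
      apply intervalIntegral.integral_congr
      intro x hx
      show (t - x) * F x = (1/(k:ℝ)) * ∑ r ∈ Finset.Icc 1 k, (t - x) * Fr r x
      rw [hF x]
      simp only [Finset.mul_sum]
      exact Finset.sum_congr rfl fun r _ => by ring
    rw [h1, intervalIntegral.integral_const_mul,
      intervalIntegral.integral_finset_sum (fun r hr => hint2 r hr)]
  have hKA : ∀ r ∈ Finset.Icc 1 k,
      Fr r t * Kr r = ∫ x in (0:ℝ)..t, Fr r x := by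
    intro r hr
    rw [mul_comm, hKr r hr]
    exact div_mul_cancel₀ _ (hFrt r hr).ne'
  have hKF : K * F t = (1 / (k:ℝ)) * ∑ r ∈ Finset.Icc 1 k, ∫ x in (0:ℝ)..t, Fr r x := by
    rw [hK, div_mul_cancel₀ _ hFtne, hIF]
  have hsumA : (∑ r ∈ Finset.Icc 1 k, ∫ x in (0:ℝ)..t, Fr r x) = (k:ℝ) * (K * F t) := by
    rw [hKF]
    field_simp
  have hsumF : (∑ r ∈ Finset.Icc 1 k, Fr r t) = (k:ℝ) * F t := by
    rw [hFt]
    field_simp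
  have hL : (k:ℝ) * σ2 * F t
      = 2 * (∑ r ∈ Finset.Icc 1 k, ∫ x in (0:ℝ)..t, (t - x) * Fr r x)
        - (k:ℝ) * K ^ 2 * F t := by
    rw [hσ2, hIG]
    field_simp
  have hR1 : (∑ r ∈ Finset.Icc 1 k, Fr r t * σ2r r)
      = 2 * (∑ r ∈ Finset.Icc 1 k, ∫ x in (0:ℝ)..t, (t - x) * Fr r x)
        - ∑ r ∈ Finset.Icc 1 k, Fr r t * Kr r ^ 2 := by
    have h1 : (∑ r ∈ Finset.Icc 1 k, Fr r t * σ2r r)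
        = ∑ r ∈ Finset.Icc 1 k,
            (2 * (∫ x in (0:ℝ)..t, (t - x) * Fr r x) - Fr r t * Kr r ^ 2) := by
      apply Finset.sum_congr rfl
      intro r hr
      rw [hσ2r r hr, mul_sub, mul_comm (Fr r t), div_mul_cancel₀ _ (hFrt r hr).ne']
    rw [h1, Finset.sum_sub_distrib, ← Finset.mul_sum]
  have hR2 : (∑ r ∈ Finset.Icc 1 k, Fr r t * (Kr r - K) ^ 2)
      = (∑ r ∈ Finset.Icc 1 k, Fr r t * Kr r ^ 2)
        - 2 * K * ((k:ℝ) * (K * F t)) + K ^ 2 * ((k:ℝ) * F t) := by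
    have h1 : (∑ r ∈ Finset.Icc 1 k, Fr r t * (Kr r - K) ^ 2)
        = ∑ r ∈ Finset.Icc 1 k,
            (Fr r t * Kr r ^ 2 - 2 * K * (∫ x in (0:ℝ)..t, Fr r x)
              + K ^ 2 * Fr r t) := by
      apply Finset.sum_congr rfl
      intro r hr
      rw [← hKA r hr]
      ring
    rw [h1, Finset.sum_add_distrib, Finset.sum_sub_distrib, ← Finset.mul_sum,
      ← Finset.mul_sum, hsumA, hsumF]
  rw [hL, hR1, hR2]
  ring
end

section
/- (Theorem 3, ARE ≥ 1.) Fix an integer k ≥ 1, a time t > 0, and CDFs F_[1],…,F_[k] of nonnegative random variables with F_[r](t) > 0 for every r, and set F = (1/k) Σ_{r=1}^{k} F_[r]. Define K(t) = (∫₀ᵗ F(x)dx)/F(t), σ²(t) = (2∫₀ᵗ(t−x)F(x)dx)/F(t) − K(t)², and for each r, K_[r](t) = (∫₀ᵗ F_[r](x)dx)/F_[r](t) and σ²_[r](t) = (2∫₀ᵗ(t−x)F_[r](x)dx)/F_[r](t) − K_[r](t)². Let σ²_SRS(t) = σ²(t)/F(t) and σ²_RSS(t) = (1/(k F(t)²))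 Σ_{r=1}^{k} [ σ²_[r](t) F_[r](t) + F_[r](t)(1 − F_[r](t))(K_[r](t) − K(t))² ]. Then σ²_SRS(t) ≥ σ²_RSS(t), i.e., the asymptotic relative efficiency ARE(t) = σ²_SRS(t)/σ²_RSS(t) satisfies ARE(t) ≥ 1. -/
/-!
Write `a_r = F_[r](t)`, `I_r = ∫₀ᵗ F_[r]` and `J_r = ∫₀ᵗ (t - x) F_[r](x) dx`. Since `F` is the
average of the `F_[r]`, its integrals are the averages of the `I_r` and `J_r`, and substituting
the definitions turns `σ²_SRS(t) - σ²_RSS(t)` into the exact identity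
`k F(t)² (σ²_SRS(t) - σ²_RSS(t)) = ∑_r a_r² (K_[r](t) - K(t))²`, whose right side is a sum of squares.
-/

open MeasureTheory ProbabilityTheory Finset

theorem intervalIntegral_mul_eq_of_eq_const_mul_sum {ι : Type*} (s : Finset ι) {a b c : ℝ}
    {g F : ℝ → ℝ} {f : ι → ℝ → ℝ} (hg : ContinuousOn g (Set.uIcc a b))
    (hf : ∀ r ∈ s, IntervalIntegrable (f r) volume a b)
    (hF : ∀ x, F x = c * ∑ r ∈ s, f r x) :
    ∫ x in a..b, g x * F x = c * ∑ r ∈ s, ∫ x in a..b, g x * f r x := by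
  have hgf : ∀ r ∈ s, IntervalIntegrable (fun x => g x * f r x) volume a b :=
    fun r hr => (hf r hr).continuousOn_mul hg
  simp_rw [hF, mul_left_comm (g _) c, mul_sum s _ (g _)]
  rw [intervalIntegral.integral_const_mul, intervalIntegral.integral_finsetSum hgf]

theorem rss_summand_eq {a J K Kr : ℝ} (ha : a ≠ 0) :
    (2 * J / a - Kr ^ 2) * a + a * (1 - a) * (Kr - K) ^ 2
      = 2 * J - 2 * K * (a * Kr) + K ^ 2 * a - a ^ 2 * (Kr - K) ^ 2 := by
  field_simp
  ring

theorem srs_variance_sub_rss_variance {ι : Type*} (s : Finset ι) {n A K σ2 : ℝ}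
    {a I J Kr σ2r : ι → ℝ} (hn : n ≠ 0) (hA0 : A ≠ 0) (ha : ∀ r ∈ s, a r ≠ 0)
    (hA : A = 1 / n * ∑ r ∈ s, a r)
    (hK : K = (1 / n * ∑ r ∈ s, I r) / A)
    (hσ2 : σ2 = 2 * (1 / n * ∑ r ∈ s, J r) / A - K ^ 2)
    (hKr : ∀ r ∈ s, Kr r = I r / a r)
    (hσ2r : ∀ r ∈ s, σ2r r = 2 * J r / a r - Kr r ^ 2) :
    σ2 / A - 1 / (n * A ^ 2) * ∑ r ∈ s, (σ2r r * a r + a r * (1 - a r) * (Kr r - K) ^ 2)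
      = 1 / (n * A ^ 2) * ∑ r ∈ s, a r ^ 2 * (Kr r - K) ^ 2 := by
  have hsum : ∑ r ∈ s, (σ2r r * a r + a r * (1 - a r) * (Kr r - K) ^ 2)
      = 2 * ∑ r ∈ s, J r - 2 * K * ∑ r ∈ s, a r * Kr r + K ^ 2 * ∑ r ∈ s, a r
        - ∑ r ∈ s, a r ^ 2 * (Kr r - K) ^ 2 := by
    rw [sum_congr rfl fun r hr => by rw [hσ2r r hr, rss_summand_eq (ha r hr)]]
    simp only [sum_sub_distrib, sum_add_distrib, mul_sum]
  have hsumI : ∑ r ∈ s, a r * Kr r = n * A * K := by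
    rw [sum_congr rfl fun r hr => by rw [hKr r hr, mul_div_cancel₀ _ (ha r hr)], hK]
    field_simp
  have hsuma : ∑ r ∈ s, a r = n * A := by rw [hA]; field_simp
  rw [hsum, hσ2, hsumI, hsuma]
  field_simp
  ring

theorem asymptotic_relative_efficiency_ge_one_general
    (k : ℕ) (hk : 1 ≤ k) (t : ℝ)
    (μ : ℕ → Measure ℝ)
    (Fr : ℕ → ℝ → ℝ) (hFr : ∀ r ∈ Finset.Icc 1 k, ∀ x, Fr r x = ProbabilityTheory.cdf (μ r) x)
    (hFrt : ∀ r ∈ Finset.Icc 1 k, 0 < Fr r t)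
    (F : ℝ → ℝ) (hF : ∀ x, F x = (1 / (k : ℝ)) * ∑ r ∈ Finset.Icc 1 k, Fr r x)
    (K σ2 : ℝ) (Kr σ2r : ℕ → ℝ)
    (hK : K = (∫ x in (0:ℝ)..t, F x) / F t)
    (hσ2 : σ2 = (2 * ∫ x in (0:ℝ)..t, (t - x) * F x) / F t - K ^ 2)
    (hKr : ∀ r ∈ Finset.Icc 1 k, Kr r = (∫ x in (0:ℝ)..t, Fr r x) / Fr r t)
    (hσ2r : ∀ r ∈ Finset.Icc 1 k,
      σ2r r = (2 * ∫ x in (0:ℝ)..t, (t - x) * Fr r x) / Fr r t - (Kr r) ^ 2)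
    (σ2SRS σ2RSS : ℝ)
    (hσ2SRS : σ2SRS = σ2 / F t)
    (hσ2RSS : σ2RSS = (1 / ((k : ℝ) * F t ^ 2)) *
      ∑ r ∈ Finset.Icc 1 k,
        (σ2r r * Fr r t + Fr r t * (1 - Fr r t) * (Kr r - K) ^ 2)) :
    σ2SRS ≥ σ2RSS := by
  have hk0 : (k : ℝ) ≠ 0 := by positivity
  have hint : ∀ r ∈ Icc 1 k, IntervalIntegrable (Fr r) volume 0 t := fun r hr => by
    rw [funext (hFr r hr)]
    exact (monotone_cdf (μ r)).intervalIntegrable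
  have hFt : 0 < F t := by
    have := sum_pos hFrt ⟨1, by simp [hk]⟩
    rw [hF]
    positivity
  have hI : ∫ x in (0:ℝ)..t, F x = 1 / k * ∑ r ∈ Icc 1 k, ∫ x in (0:ℝ)..t, Fr r x := by
    simpa using intervalIntegral_mul_eq_of_eq_const_mul_sum (Icc 1 k) (g := fun _ => 1)
      continuousOn_const hint hF
  have hJ := intervalIntegral_mul_eq_of_eq_const_mul_sum (Icc 1 k) (g := fun x => t - x)
    (by fun_prop) hint hF
  have hdiff := srs_variance_sub_rss_variance (Icc 1 k) hk0 hFt.ne' (fun r hr => (hFrt r hr).ne')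
    (hF t) (hI ▸ hK) (hJ ▸ hσ2) hKr hσ2r
  rw [hσ2SRS, hσ2RSS, ge_iff_le, ← sub_nonneg, hdiff]
  positivity

/-- (Theorem 3, ARE ≥ 1.)  Fix an integer `k ≥ 1`, a time `t > 0`, and CDFs
`F_[1], …, F_[k]` of nonnegative random variables with `F_[r] t > 0` for every `r`, and
set `F = (1/k) ∑_{r=1}^{k} F_[r]`.  Define `K t = (∫₀ᵗ F)/(F t)`,
`σ² t = (2∫₀ᵗ (t-x) F x dx)/(F t) - (K t)²`, and for each `r`,
`K_[r] t = (∫₀ᵗ F_[r])/(F_[r] t)` and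
`σ²_[r] t = (2∫₀ᵗ (t-x) F_[r] x dx)/(F_[r] t) - (K_[r] t)²`.  Let
`σ²_SRS t = σ² t / F t` and
`σ²_RSS t = (1/(k (F t)²)) ∑_{r=1}^{k} [σ²_[r] t F_[r] t
  + F_[r] t (1 - F_[r] t) (K_[r] t - K t)²]`.  Then `σ²_SRS t ≥ σ²_RSS t`, i.e. the
asymptotic relative efficiency `ARE t = σ²_SRS t / σ²_RSS t` satisfies `ARE t ≥ 1`. -/
theorem asymptotic_relative_efficiency_ge_one
    (k : ℕ) (hk : 1 ≤ k) (t : ℝ) (ht : 0 < t)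
    (μ : ℕ → Measure ℝ) [∀ r, IsProbabilityMeasure (μ r)]
    (hμnn : ∀ r ∈ Finset.Icc 1 k, μ r (Set.Iio 0) = 0)
    (Fr : ℕ → ℝ → ℝ) (hFr : ∀ r ∈ Finset.Icc 1 k, ∀ x, Fr r x = ProbabilityTheory.cdf (μ r) x)
    (hFrt : ∀ r ∈ Finset.Icc 1 k, 0 < Fr r t)
    (F : ℝ → ℝ) (hF : ∀ x, F x = (1 / (k : ℝ)) * ∑ r ∈ Finset.Icc 1 k, Fr r x)
    (K σ2 : ℝ) (Kr σ2r : ℕ → ℝ)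
    (hK : K = (∫ x in (0:ℝ)..t, F x) / F t)
    (hσ2 : σ2 = (2 * ∫ x in (0:ℝ)..t, (t - x) * F x) / F t - K ^ 2)
    (hKr : ∀ r ∈ Finset.Icc 1 k, Kr r = (∫ x in (0:ℝ)..t, Fr r x) / Fr r t)
    (hσ2r : ∀ r ∈ Finset.Icc 1 k,
      σ2r r = (2 * ∫ x in (0:ℝ)..t, (t - x) * Fr r x) / Fr r t - (Kr r) ^ 2)
    (σ2SRS σ2RSS : ℝ)
    (hσ2SRS : σ2SRS = σ2 / F t)
    (hσ2RSS : σ2RSS = (1 / ((k : ℝ) * F t ^ 2)) *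
      ∑ r ∈ Finset.Icc 1 k,
        (σ2r r * Fr r t + Fr r t * (1 - Fr r t) * (Kr r - K) ^ 2)) :
    σ2SRS ≥ σ2RSS :=
  asymptotic_relative_efficiency_ge_one_general k hk t μ Fr hFr hFrt F hF K σ2 Kr σ2r hK hσ2 hKr
    hσ2r σ2SRS σ2RSS hσ2SRS hσ2RSS
end

section
/- Fix integers k ≥ 1, m ≥ 1 and a time t > 0. Let {X_[r]j : r = 1,…,k; j = 1,…,m} be mutually independent nonnegative random variables where X_[r]j has CDF F_[r] with F_[r](t) > 0, and let K_[r](t) = (∫₀ᵗ F_[r](x)dx)/F_[r](t). Define V_r = Σ_{j=1}^{m} 1{X_[r]j ≤ t}, U_r = Σ_{j=1}^{m} (t − X_[r]j) 1{X_[r]j ≤ t}, and K_RSS(t) = (Σ_{r=1}^{k} U_r)·1{Σ_r V_r > 0}/(Σ_{r=1}^{k} V_r) (taken to be 0 when Σ_r V_r = 0). Then E[K_RSS(t)] = Σ_{v ∈ {0,…,m}^k, v₁+⋯+v_k > 0} [ p(v)/(v₁+⋯+v_k) ] · Σ_{r=1}^{k} v_r K_[r](t), where p(v) = Π_{r=1}^{k}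 C(m,v_r) F_[r](t)^{v_r} (1 − F_[r](t))^{m−v_r}. -/
/-!
Split the sample space according to the random pattern `belowPattern X t ω`, which records for
each stratum `r` the units `j` with `X_[r]j ≤ t`. On the event that the pattern equals `S`, the
estimator is `∑_{r, j ∈ S r} (t - X_[r]j) / ∑_r |S r|`. By independence, restricting to this event
affects a unit `j ∈ S r` only through `{X_[r]j ≤ t}`, so
`E[(t - X_[r]j) 1{pattern = S}] = K_[r](t) P(pattern = S)`, where the layer-cake formula gives
`E[(t - X)⁺] = ∫₀ᵗ F`. Finally `P(pattern = S)` depends on `S` only through the counts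
`v_r = |S r|`, and each count vector is realised by `∏_r C(m, v_r)` patterns.
-/

open MeasureTheory ProbabilityTheory Finset

/-- Cross-multiplied form of `E[g (Y i) | Φ] = E[g (Y i) φ i (Y i)] / E[φ i (Y i)]` for the
weight `Φ = ∏ q, φ q (Y q)`, valid without any division. -/
theorem ProbabilityTheory.iIndepFun.integral_comp_mul_prod_comp {Ω ι 𝓧 : Type*}
    [MeasurableSpace Ω] {μ : Measure Ω} [Fintype ι] [MeasurableSpace 𝓧] {Y : ι → Ω → 𝓧}
    (hY : iIndepFun Y μ) (hYm : ∀ i, Measurable (Y i)) {φ : ι → 𝓧 → ℝ}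
    (hφ : ∀ i, Measurable (φ i)) {g : 𝓧 → ℝ} (hg : Measurable g) (i : ι) :
    (∫ ω, φ i (Y i ω) ∂μ) * ∫ ω, g (Y i ω) * ∏ q, φ q (Y q ω) ∂μ
      = (∫ ω, g (Y i ω) * φ i (Y i ω) ∂μ) * ∫ ω, ∏ q, φ q (Y q ω) ∂μ := by
  classical
  set ψ := Function.update φ i (g * φ i)
  have hψ : ∀ q, Measurable (ψ q) := by
    intro q
    rcases eq_or_ne q i with rfl | hq
    · simpa [ψ] using hg.mul (hφ q)
    · simpa [ψ, hq] using hφ q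
  have hprod : ∀ ω, g (Y i ω) * ∏ q, φ q (Y q ω) = ∏ q, ψ q (Y q ω) := by
    intro ω
    rw [← mul_prod_erase univ _ (mem_univ i), ← mul_prod_erase univ _ (mem_univ i), ← mul_assoc]
    congr 1
    · simp [ψ]
    · exact prod_congr rfl fun q hq => by simp [ψ, ne_of_mem_erase hq]
  have hfactor := fun (f : ι → 𝓧 → ℝ) (hf : ∀ q, Measurable (f q)) =>
    hY.integral_fun_prod_comp (fun q => (hYm q).aemeasurable)
      (fun q => (hf q).aestronglyMeasurable)
  simp_rw [hprod, hfactor ψ hψ, hfactor φ hφ, ← mul_prod_erase univ _ (mem_univ i)]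
  have hrest : ∀ q ∈ univ.erase i, ∫ ω, ψ q (Y q ω) ∂μ = ∫ ω, φ q (Y q ω) ∂μ :=
    fun q hq => by simp [ψ, ne_of_mem_erase hq]
  rw [prod_congr rfl hrest]
  simp only [ψ, Function.update_self, Pi.mul_apply]
  ring

theorem Fintype.sum_pi_finset_apply_card {κ J M : Type*} [Fintype κ] [DecidableEq κ] [Fintype J]
    [AddCommMonoid M] (G : (κ → ℕ) → M) :
    ∑ S : κ → Finset J, G (fun r => #(S r))
      = ∑ v ∈ Fintype.piFinset fun _ : κ => range (Fintype.card J + 1),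
          (∏ r, (Fintype.card J).choose (v r)) • G v := by
  classical
  have hmaps : ∀ S ∈ (univ : Finset (κ → Finset J)),
      (fun r => #(S r)) ∈ Fintype.piFinset fun _ : κ => range (Fintype.card J + 1) :=
    fun S _ => Fintype.mem_piFinset.2 fun r => mem_range_succ_iff.2 (card_le_univ _)
  rw [← sum_fiberwise_of_maps_to' hmaps]
  refine Finset.sum_congr rfl fun v _ => ?_
  have hfiber : {S ∈ (univ : Finset (κ → Finset J)) | (fun r => #(S r)) = v}
      = Fintype.piFinset fun r => powersetCard (v r) univ := by
    ext S
    simp [Fintype.mem_piFinset, funext_iff]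
  rw [sum_const, hfiber, Fintype.card_piFinset]
  simp [card_powersetCard]

theorem prod_ite_mem_eq_pow_mul_pow {J M : Type*} [Fintype J] [DecidableEq J] [CommMonoid M]
    (s : Finset J) (a b : M) :
    ∏ j, (if j ∈ s then a else b) = a ^ #s * b ^ (Fintype.card J - #s) := by
  rw [prod_ite, prod_const, prod_const, filter_mem_eq_inter, univ_inter, filter_not,
    filter_mem_eq_inter, univ_inter, ← compl_eq_univ_sdiff, card_compl]

noncomputable def pastLifetime (t x : ℝ) : ℝ := (t - x) * if x ≤ t then 1 else 0

noncomputable def meanPastLifetime (F : ℝ → ℝ) (t : ℝ) : ℝ := (∫ x in 0..t, F x) / F t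

theorem measurable_pastLifetime (t : ℝ) : Measurable (pastLifetime t) :=
  (measurable_const.sub measurable_id).mul
    (Measurable.ite measurableSet_Iic measurable_const measurable_const)

theorem pastLifetime_nonneg (t x : ℝ) : 0 ≤ pastLifetime t x := by
  unfold pastLifetime; split_ifs <;> linarith

theorem pastLifetime_le {t x : ℝ} (ht : 0 ≤ t) (hx : 0 ≤ x) : pastLifetime t x ≤ t := by
  unfold pastLifetime; split_ifs <;> linarith

theorem pastLifetime_eq_zero {t x : ℝ} (h : t < x) : pastLifetime t x = 0 := by
  simp [pastLifetime, not_le.2 h]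

theorem pastLifetime_mul_ite_le (t x : ℝ) :
    pastLifetime t x * (if x ≤ t then 1 else 0) = pastLifetime t x := by
  unfold pastLifetime; split_ifs <;> simp

theorem le_pastLifetime_iff {s t x : ℝ} (hs : 0 < s) : s ≤ pastLifetime t x ↔ x ≤ t - s := by
  unfold pastLifetime; split_ifs <;> constructor <;> intro <;> linarith

theorem measurable_ite_le_iff (t : ℝ) (p : Prop) [Decidable p] :
    Measurable fun x : ℝ => if (x ≤ t ↔ p) then (1 : ℝ) else 0 := by
  refine Measurable.ite (p := fun x : ℝ => x ≤ t ↔ p) ?_ measurable_const measurable_const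
  by_cases hp : p
  · simp only [hp, iff_true]; exact measurableSet_Iic
  · simp only [hp, iff_false]; exact measurableSet_Iic.compl

section Integral

variable {Ω : Type*} [MeasurableSpace Ω] {μ : Measure Ω} {Y : Ω → ℝ} {t : ℝ}

theorem integrable_pastLifetime_comp [IsFiniteMeasure μ] (hY : Measurable Y)
    (hnn : ∀ ω, 0 ≤ Y ω) (ht : 0 ≤ t) : Integrable (fun ω => pastLifetime t (Y ω)) μ :=
  .of_bound ((measurable_pastLifetime t).comp hY).aestronglyMeasurable t <| .of_forall fun ω => by
    rw [Real.norm_of_nonneg (pastLifetime_nonneg _ _)]; exact pastLifetime_le ht (hnn ω)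

theorem integral_pastLifetime_comp [IsFiniteMeasure μ] (hY : Measurable Y) (hnn : ∀ ω, 0 ≤ Y ω)
    (ht : 0 ≤ t) : ∫ ω, pastLifetime t (Y ω) ∂μ = ∫ x in 0..t, μ.real {ω | Y ω ≤ x} := by
  rw [(integrable_pastLifetime_comp hY hnn ht).integral_eq_integral_Ioc_meas_le
    (.of_forall fun ω => pastLifetime_nonneg _ _) (.of_forall fun ω => pastLifetime_le ht (hnn ω)),
    ← intervalIntegral.integral_of_le ht]
  calc ∫ s in 0..t, μ.real {ω | s ≤ pastLifetime t (Y ω)}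
      = ∫ s in 0..t, μ.real {ω | Y ω ≤ t - s} := by
        refine intervalIntegral.integral_congr_ae (.of_forall fun s hs => ?_)
        rw [Set.uIoc_of_le ht] at hs
        simp_rw [le_pastLifetime_iff hs.1]
    _ = ∫ x in 0..t, μ.real {ω | Y ω ≤ x} := by
        simp [intervalIntegral.integral_comp_sub_left (fun x => μ.real {ω | Y ω ≤ x})]

theorem integral_ite_le_iff [IsProbabilityMeasure μ] (hY : Measurable Y) (p : Prop)
    [Decidable p] :
    ∫ ω, (if (Y ω ≤ t ↔ p) then (1 : ℝ) else 0) ∂μ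
      = if p then μ.real {ω | Y ω ≤ t} else 1 - μ.real {ω | Y ω ≤ t} := by
  have hmeas : MeasurableSet {ω | Y ω ≤ t} := hY measurableSet_Iic
  by_cases hp : p
  · simp only [hp, iff_true, if_true]
    rw [← integral_indicator_one hmeas]; rfl
  · simp only [hp, iff_false, if_false]
    rw [← probReal_compl_eq_one_sub hmeas, ← integral_indicator_one hmeas.compl]
    simp [Set.indicator_apply]

end Integral

section Pattern

variable {Ω κ J : Type*} [Fintype κ] [Fintype J] [DecidableEq J] {X : κ → J → Ω → ℝ} {t : ℝ}

noncomputable def belowPattern (X : κ → J → Ω → ℝ) (t : ℝ) (ω : Ω) : κ → Finset J :=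
  fun r => {j | X r j ω ≤ t}

theorem ite_belowPattern_eq_prod (S : κ → Finset J) (ω : Ω) :
    (if belowPattern X t ω = S then (1 : ℝ) else 0)
      = ∏ q : κ × J, if (X q.1 q.2 ω ≤ t ↔ q.2 ∈ S q.1) then 1 else 0 := by
  rw [prod_boole]
  congr 1
  simp [belowPattern, funext_iff, Finset.ext_iff, Prod.forall]

theorem pastLifetime_mul_ite_belowPattern_of_notMem {S : κ → Finset J} {r : κ} {j : J}
    (hj : j ∉ S r) (ω : Ω) :
    pastLifetime t (X r j ω) * (if belowPattern X t ω = S then 1 else 0) = 0 := by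
  split_ifs with hS
  · have : t < X r j ω := by simpa [← hS, belowPattern] using hj
    rw [pastLifetime_eq_zero this, zero_mul]
  · rw [mul_zero]

variable [MeasurableSpace Ω] {μ : Measure Ω}

theorem measurable_ite_belowPattern (hXm : ∀ r j, Measurable (X r j)) (S : κ → Finset J) :
    Measurable fun ω => if belowPattern X t ω = S then (1 : ℝ) else 0 := by
  simp_rw [ite_belowPattern_eq_prod]
  exact Finset.measurable_prod _ fun q _ => (measurable_ite_le_iff t _).comp (hXm _ _)

theorem MeasureTheory.Integrable.mul_ite_belowPattern {f : Ω → ℝ} (hf : Integrable f μ)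
    (hXm : ∀ r j, Measurable (X r j)) (S : κ → Finset J) :
    Integrable (fun ω => f ω * if belowPattern X t ω = S then 1 else 0) μ :=
  hf.mul_bdd (measurable_ite_belowPattern hXm S).aestronglyMeasurable (c := 1)
    (.of_forall fun ω => by split_ifs <;> simp)

variable [IsProbabilityMeasure μ]

theorem integral_ite_belowPattern (hXm : ∀ r j, Measurable (X r j))
    (hindep : iIndepFun (fun q : κ × J => X q.1 q.2) μ) {F : κ → ℝ}
    (hF : ∀ r j, μ.real {ω | X r j ω ≤ t} = F r) (S : κ → Finset J) :
    ∫ ω, (if belowPattern X t ω = S then (1 : ℝ) else 0) ∂μ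
      = ∏ r, F r ^ #(S r) * (1 - F r) ^ (Fintype.card J - #(S r)) := by
  simp_rw [ite_belowPattern_eq_prod]
  rw [hindep.integral_fun_prod_comp (f := fun q x => if (x ≤ t ↔ q.2 ∈ S q.1) then 1 else 0)
    (fun q => (hXm q.1 q.2).aemeasurable) fun q => (measurable_ite_le_iff t _).aestronglyMeasurable,
    Fintype.prod_prod_type]
  simp_rw [integral_ite_le_iff (hXm _ _), hF, prod_ite_mem_eq_pow_mul_pow]

theorem integral_pastLifetime_mul_ite_belowPattern (hXm : ∀ r j, Measurable (X r j))
    (hXnn : ∀ r j ω, 0 ≤ X r j ω) (hindep : iIndepFun (fun q : κ × J => X q.1 q.2) μ)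
    (ht : 0 ≤ t) {S : κ → Finset J} {r : κ} {j : J} (hj : j ∈ S r) :
    μ.real {ω | X r j ω ≤ t}
        * ∫ ω, pastLifetime t (X r j ω) * (if belowPattern X t ω = S then 1 else 0) ∂μ
      = (∫ x in 0..t, μ.real {ω | X r j ω ≤ x})
        * ∫ ω, (if belowPattern X t ω = S then (1 : ℝ) else 0) ∂μ := by
  have key := hindep.integral_comp_mul_prod_comp (fun q => hXm q.1 q.2)
    (fun q => measurable_ite_le_iff t (q.2 ∈ S q.1)) (measurable_pastLifetime t) (r, j)
  simp_rw [ite_belowPattern_eq_prod]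
  convert key using 2
  · simpa [hj] using (integral_ite_le_iff (μ := μ) (t := t) (hXm r j) True).symm
  · rw [← integral_pastLifetime_comp (hXm r j) (hXnn r j) ht]
    congr 1; ext ω
    simp only [hj, iff_true]
    exact (pastLifetime_mul_ite_le _ _).symm

theorem integral_sum_pastLifetime_mul_ite_belowPattern (hXm : ∀ r j, Measurable (X r j))
    (hXnn : ∀ r j ω, 0 ≤ X r j ω) (hindep : iIndepFun (fun q : κ × J => X q.1 q.2) μ)
    (ht : 0 ≤ t) {F : κ → ℝ → ℝ} (hF : ∀ r j x, μ.real {ω | X r j ω ≤ x} = F r x)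
    (hFt : ∀ r, F r t ≠ 0) (S : κ → Finset J) :
    ∫ ω, (∑ r, ∑ j, pastLifetime t (X r j ω)) * (if belowPattern X t ω = S then 1 else 0) ∂μ
      = (∑ r, #(S r) * meanPastLifetime (F r) t)
        * ∫ ω, (if belowPattern X t ω = S then (1 : ℝ) else 0) ∂μ := by
  have hint : ∀ r j, Integrable
      (fun ω => pastLifetime t (X r j ω) * if belowPattern X t ω = S then 1 else 0) μ :=
    fun r j => (integrable_pastLifetime_comp (hXm r j) (hXnn r j) ht).mul_ite_belowPattern hXm S
  have hterm : ∀ r j,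
      ∫ ω, pastLifetime t (X r j ω) * (if belowPattern X t ω = S then 1 else 0) ∂μ
        = if j ∈ S r then meanPastLifetime (F r) t
            * ∫ ω, (if belowPattern X t ω = S then (1 : ℝ) else 0) ∂μ else 0 := by
    intro r j
    split_ifs with hj
    · have key := integral_pastLifetime_mul_ite_belowPattern hXm hXnn hindep ht hj
      simp_rw [hF] at key
      rw [meanPastLifetime, div_mul_eq_mul_div, eq_div_iff (hFt r), mul_comm, key]
    · simp_rw [pastLifetime_mul_ite_belowPattern_of_notMem hj, integral_zero]
  simp_rw [sum_mul]
  rw [integral_finsetSum _ fun r _ => integrable_finsetSum _ fun j _ => hint r j]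
  simp_rw [integral_finsetSum _ fun j _ => hint _ j, hterm, sum_ite_mem, univ_inter, sum_const,
    nsmul_eq_mul, mul_assoc]

theorem integral_sum_pastLifetime_div_card_belowPattern [DecidableEq κ] (hXm : ∀ r j, Measurable (X r j))
    (hXnn : ∀ r j ω, 0 ≤ X r j ω) (hindep : iIndepFun (fun q : κ × J => X q.1 q.2) μ)
    (ht : 0 ≤ t) {F : κ → ℝ → ℝ} (hF : ∀ r j x, μ.real {ω | X r j ω ≤ x} = F r x)
    (hFt : ∀ r, F r t ≠ 0) :
    ∫ ω, (∑ r, ∑ j, pastLifetime t (X r j ω)) / ∑ r, (#(belowPattern X t ω r) : ℝ) ∂μ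
      = ∑ S : κ → Finset J, (∑ r, #(S r) * meanPastLifetime (F r) t)
          * (∏ r, F r t ^ #(S r) * (1 - F r t) ^ (Fintype.card J - #(S r)))
          / ∑ r, (#(S r) : ℝ) := by
  have hsplit : ∀ ω, (∑ r, ∑ j, pastLifetime t (X r j ω)) / ∑ r, (#(belowPattern X t ω r) : ℝ)
      = ∑ S : κ → Finset J, (∑ r, ∑ j, pastLifetime t (X r j ω))
          * (if belowPattern X t ω = S then 1 else 0) / ∑ r, (#(S r) : ℝ) := by
    intro ω
    simp_rw [mul_ite, mul_one, mul_zero, ite_div, zero_div, sum_ite_eq, mem_univ, if_true]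
  have hint : Integrable (fun ω => ∑ r, ∑ j, pastLifetime t (X r j ω)) μ :=
    integrable_finsetSum _ fun r _ => integrable_finsetSum _ fun j _ =>
      integrable_pastLifetime_comp (hXm r j) (hXnn r j) ht
  rw [integral_congr_ae (.of_forall hsplit),
    integral_finsetSum _ fun S _ => (hint.mul_ite_belowPattern hXm S).div_const _]
  simp_rw [integral_div, integral_sum_pastLifetime_mul_ite_belowPattern hXm hXnn hindep ht hF hFt,
    integral_ite_belowPattern hXm hindep (fun r j => hF r j t)]

end Pattern

theorem expectation_K_RSS_general
    {Ω : Type*} [MeasurableSpace Ω] (μ : Measure Ω) [IsProbabilityMeasure μ]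
    (k m : ℕ) (t : ℝ) (ht : 0 < t)
    (X : Fin k → Fin m → Ω → ℝ) (hXmeas : ∀ r j, Measurable (X r j))
    (hXnn : ∀ r j ω, 0 ≤ X r j ω)
    (hindep : iIndepFun (fun p : Fin k × Fin m => X p.1 p.2) μ)
    (Fr : Fin k → ℝ → ℝ) (hFr : ∀ r j x, Fr r x = (μ {ω | X r j ω ≤ x}).toReal)
    (hFrt : ∀ r, 0 < Fr r t)
    (Kr : Fin k → ℝ) (hKr : ∀ r, Kr r = (∫ x in (0:ℝ)..t, Fr r x) / Fr r t)
    (V : Fin k → Ω → ℝ)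
    (hV : ∀ r ω, V r ω = ∑ j, (if X r j ω ≤ t then (1 : ℝ) else 0))
    (U : Fin k → Ω → ℝ)
    (hU : ∀ r ω, U r ω = ∑ j, (t - X r j ω) * (if X r j ω ≤ t then (1 : ℝ) else 0))
    (KRSS : Ω → ℝ)
    (hKRSS : ∀ ω, KRSS ω =
      if 0 < ∑ r, V r ω then (∑ r, U r ω) / (∑ r, V r ω) else 0)
    (p : (Fin k → ℕ) → ℝ)
    (hp : ∀ v, p v = ∏ r, (m.choose (v r) : ℝ) * Fr r t ^ (v r) * (1 - Fr r t) ^ (m - v r)) :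
    (∫ ω, KRSS ω ∂ μ)
      = ∑ v ∈ (Fintype.piFinset fun _ : Fin k => Finset.range (m + 1)).filter
            (fun v => 0 < ∑ r, v r),
          (p v / (∑ r, (v r : ℝ))) * ∑ r, (v r : ℝ) * Kr r := by
  classical
  have hKRSS' : ∀ ω, KRSS ω
      = (∑ r, ∑ j, pastLifetime t (X r j ω)) / ∑ r, (#(belowPattern X t ω r) : ℝ) := by
    intro ω
    have hVsum : ∑ r, V r ω = ∑ r, (#(belowPattern X t ω r) : ℝ) :=
      sum_congr rfl fun r _ => by rw [hV, sum_boole]; rfl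
    have hUsum : ∑ r, U r ω = ∑ r, ∑ j, pastLifetime t (X r j ω) :=
      sum_congr rfl fun r _ => hU r ω
    rw [hKRSS, hVsum, hUsum, ite_eq_left_iff]
    intro hpos
    rw [le_antisymm (not_lt.1 hpos) (sum_nonneg fun r _ => Nat.cast_nonneg _), div_zero]
  set G : (Fin k → ℕ) → ℝ := fun v => (∑ r, (v r : ℝ) * meanPastLifetime (Fr r) t)
    * (∏ r, Fr r t ^ v r * (1 - Fr r t) ^ (m - v r)) / ∑ r, (v r : ℝ) with hG
  calc ∫ ω, KRSS ω ∂μ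
      = ∑ S : Fin k → Finset (Fin m), G fun r => #(S r) := by
        rw [integral_congr_ae (.of_forall hKRSS'),
          integral_sum_pastLifetime_div_card_belowPattern hXmeas hXnn hindep ht.le
            (fun r j x => (hFr r j x).symm) fun r => (hFrt r).ne']
        simp only [Fintype.card_fin, hG]
    _ = ∑ v ∈ Fintype.piFinset fun _ : Fin k => range (m + 1),
          (∏ r, m.choose (v r)) • G v := by
        simpa using Fintype.sum_pi_finset_apply_card (J := Fin m) G
    _ = _ := by
        rw [sum_filter]
        refine Finset.sum_congr rfl fun v _ => ?_
        split_ifs with hv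
        · simp only [hp, hG, hKr, meanPastLifetime, nsmul_eq_mul, prod_mul_distrib]
          push_cast
          ring
        · simp [hG, ← Nat.cast_sum, Nat.eq_zero_of_not_pos hv]

/-- Fix integers `k ≥ 1`, `m ≥ 1` and a time `t > 0`.  Let
`{X_[r]j : r = 1, …, k; j = 1, …, m}` be mutually independent nonnegative random
variables where `X_[r]j` has CDF `F_[r]` with `F_[r] t > 0`, and let
`K_[r] t = (∫₀ᵗ F_[r] x dx)/(F_[r] t)`.  Define `V_r = ∑_j 1{X_[r]j ≤ t}`,
`U_r = ∑_j (t - X_[r]j) 1{X_[r]j ≤ t}` and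
`K_RSS t = (∑_r U_r) 1{∑_r V_r > 0} / (∑_r V_r)` (taken to be `0` when `∑_r V_r = 0`).
Then `E[K_RSS t] = ∑_{v, ∑ v_r > 0} (p v / ∑_r v_r) ∑_r v_r K_[r] t`, where
`p v = ∏_r C(m, v_r) (F_[r] t)^{v_r} (1 - F_[r] t)^{m - v_r}`. -/
theorem expectation_K_RSS
    {Ω : Type*} [MeasurableSpace Ω] (μ : Measure Ω) [IsProbabilityMeasure μ]
    (k m : ℕ) (hk : 1 ≤ k) (hm : 1 ≤ m) (t : ℝ) (ht : 0 < t)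
    (X : Fin k → Fin m → Ω → ℝ) (hXmeas : ∀ r j, Measurable (X r j))
    (hXnn : ∀ r j ω, 0 ≤ X r j ω)
    (hindep : iIndepFun (fun p : Fin k × Fin m => X p.1 p.2) μ)
    (Fr : Fin k → ℝ → ℝ) (hFr : ∀ r j x, Fr r x = (μ {ω | X r j ω ≤ x}).toReal)
    (hFrt : ∀ r, 0 < Fr r t)
    (Kr : Fin k → ℝ) (hKr : ∀ r, Kr r = (∫ x in (0:ℝ)..t, Fr r x) / Fr r t)
    (V : Fin k → Ω → ℝ)
    (hV : ∀ r ω, V r ω = ∑ j, (if X r j ω ≤ t then (1 : ℝ) else 0))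
    (U : Fin k → Ω → ℝ)
    (hU : ∀ r ω, U r ω = ∑ j, (t - X r j ω) * (if X r j ω ≤ t then (1 : ℝ) else 0))
    (KRSS : Ω → ℝ)
    (hKRSS : ∀ ω, KRSS ω =
      if 0 < ∑ r, V r ω then (∑ r, U r ω) / (∑ r, V r ω) else 0)
    (p : (Fin k → ℕ) → ℝ)
    (hp : ∀ v, p v = ∏ r, (m.choose (v r) : ℝ) * Fr r t ^ (v r) * (1 - Fr r t) ^ (m - v r)) :
    (∫ ω, KRSS ω ∂ μ)
      = ∑ v ∈ (Fintype.piFinset fun _ : Fin k => Finset.range (m + 1)).filter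
            (fun v => 0 < ∑ r, v r),
          (p v / (∑ r, (v r : ℝ))) * ∑ r, (v r : ℝ) * Kr r :=
  expectation_K_RSS_general μ k m t ht X hXmeas hXnn hindep Fr hFr hFrt Kr hKr V hV U hU KRSS hKRSS
    p hp
end

section
/- Fix an integer k ≥ 1 and CDFs F_[1],…,F_[k] with F = (1/k) Σ_{r=1}^{k} F_[r]. Let {X_[r]j : r = 1,…,k; j ∈ ℕ} be mutually independent random variables with X_[r]j having CDF F_[r] for every j, and let F_RSS,m(t) = (1/(mk)) Σ_{r=1}^{k} Σ_{j=1}^{m} 1{X_[r]j ≤ t} be the RSS empirical distribution function. Then almost surely sup_{t ∈ ℝ} |F_RSS,m(t) − F(t)| → 0 as m → ∞. -/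
/-!
Each row `(X r j)_j` is an i.i.d. sequence and the RSS empirical CDF is the average over the rows
of their empirical CDFs, so it suffices to prove the classical Glivenko–Cantelli theorem for one
row. There, the strong law of large numbers gives almost sure convergence of the empirical
frequencies of `Iic x` and `Iio x` simultaneously at the countably many quantiles
`x = Q p = inf {x | p ≤ F x}`, `p ∈ ℚ ∩ (0, 1)`. Since the empirical CDF is monotone,
convergence on the finite grid of quantiles `Q (i / N)` controls the whole difference up to
`2 / N` (Pólya's argument): between two consecutive grid points the true CDF increases by at
most `1 / N`.
-/

open MeasureTheory ProbabilityTheory Filter Finset Topology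

section UniformConvergence

variable {ι κ α β : Type*} {l : Filter κ}

theorem tendstoUniformly_finset_sum [UniformSpace β] [AddCommGroup β] [IsUniformAddGroup β]
    (s : Finset ι) {f : ι → κ → α → β} {g : ι → α → β}
    (h : ∀ i ∈ s, TendstoUniformly (f i) (g i) l) :
    TendstoUniformly (fun n x => ∑ i ∈ s, f i n x) (fun x => ∑ i ∈ s, g i x) l := by
  classical
  induction s using Finset.induction_on with
  | empty => exact fun u hu => Eventually.of_forall fun _ _ => by simpa using refl_mem_uniformity hu
  | insert i s hi ih =>
    simp only [Finset.sum_insert hi]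
    exact (h i (mem_insert_self i s)).fun_add (ih fun j hj => h j (mem_insert_of_mem hj))

theorem TendstoUniformly.const_mul {f : κ → α → ℝ} {g : α → ℝ} (h : TendstoUniformly f g l)
    (c : ℝ) : TendstoUniformly (fun n x => c * f n x) (fun x => c * g x) l :=
  (uniformContinuous_mul_left' c).comp_tendstoUniformly h

theorem TendstoUniformly.tendsto_iSup_abs_sub {f : κ → α → ℝ} {g : α → ℝ}
    (h : TendstoUniformly f g l) : Tendsto (fun n => ⨆ x, |f n x - g x|) l (𝓝 0) := by
  refine Metric.tendsto_nhds.2 fun ε hε => ?_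
  filter_upwards [Metric.tendstoUniformly_iff.1 h (ε / 2) (half_pos hε)] with n hn
  have hsup : ⨆ x, |f n x - g x| ≤ ε / 2 :=
    Real.iSup_le (fun x => by rw [abs_sub_comm]; exact (hn x).le) (half_pos hε).le
  rw [Real.dist_eq, sub_zero, abs_of_nonneg (Real.iSup_nonneg fun _ => abs_nonneg _)]
  linarith

end UniformConvergence

theorem exists_div_le_le_succ_div {N : ℕ} (hN : 0 < N) {x : ℝ} (hx : x ∈ Set.Icc 0 1) :
    ∃ i < N, (i : ℝ) / N ≤ x ∧ x ≤ (i + 1) / N := by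
  have hN' : (0 : ℝ) < N := by exact_mod_cast hN
  rcases hx.2.lt_or_eq with hx1 | rfl
  · have hNx : 0 ≤ N * x := mul_nonneg hN'.le hx.1
    refine ⟨⌊N * x⌋₊, ?_, ?_, ?_⟩
    · rw [Nat.floor_lt hNx]; nlinarith
    · rw [div_le_iff₀ hN']; linarith [Nat.floor_le hNx]
    · rw [le_div_iff₀ hN']; linarith [Nat.lt_floor_add_one (N * x)]
  · refine ⟨N - 1, by omega, ?_, ?_⟩
    · rw [div_le_one hN']; exact_mod_cast Nat.sub_le N 1
    · rw [Nat.cast_sub hN, le_div_iff₀ hN']; simp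

theorem cast_div_succ_mem_Ioo {i N : ℕ} (hi : i ∈ Finset.Ioo 0 (N + 1)) :
    (i : ℝ) / (N + 1) ∈ Set.Ioo 0 1 := by
  rw [Finset.mem_Ioo] at hi
  have hi0 : (0 : ℝ) < i := by exact_mod_cast hi.1
  have hiN : (i : ℝ) < N + 1 := by exact_mod_cast hi.2
  exact ⟨by positivity, (div_lt_one (by positivity)).2 hiN⟩

section Polya

-- `G t` and `Gn n t` play the role of the left limits `F (t-)` and `Fn n (t-)`.

variable {F G Q : ℝ → ℝ} {Fn Gn : ℕ → ℝ → ℝ}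

theorem eventually_sub_le_of_tendsto_at_quantiles (hF : ∀ t, F t ∈ Set.Icc 0 1)
    (hFn_nonneg : ∀ n t, 0 ≤ Fn n t) (hFn_mono : ∀ n, Monotone (Fn n))
    (hQ : ∀ p ∈ Set.Ioo (0 : ℝ) 1, ∀ t, Q p ≤ t ↔ p ≤ F t)
    (hFn_lim : ∀ p : ℚ, (p : ℝ) ∈ Set.Ioo 0 1 → Tendsto (Fn · (Q p)) atTop (𝓝 (F (Q p))))
    {ε : ℝ} (hε : 0 < ε) : ∀ᶠ n in atTop, ∀ t, F t - ε ≤ Fn n t := by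
  obtain ⟨N, hN⟩ := exists_nat_one_div_lt (half_pos hε)
  have hlevel : ∀ i ∈ Finset.Ioo 0 (N + 1), ((i : ℝ) / (N + 1)) ∈ Set.Ioo 0 1 :=
    fun _ hi => cast_div_succ_mem_Ioo hi
  have hgrid : ∀ᶠ n in atTop, ∀ i ∈ Finset.Ioo 0 (N + 1),
      (i : ℝ) / (N + 1) - ε / 2 < Fn n (Q (i / (N + 1))) := by
    refine (eventually_all_finset _).2 fun i hi => ?_
    have hp := hlevel i hi
    have hlim := hFn_lim (i / (N + 1)) (by push_cast; exact hp)
    push_cast at hlim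
    exact hlim.eventually_const_lt (by linarith [(hQ _ hp _).1 le_rfl])
  filter_upwards [hgrid] with n hn t
  obtain ⟨i, hiN, hFt_ge, hFt_le⟩ := exists_div_le_le_succ_div N.succ_pos (hF t)
  push_cast at hFt_ge hFt_le
  rw [add_div] at hFt_le
  rcases Nat.eq_zero_or_pos i with rfl | hi0
  · simp only [CharP.cast_eq_zero, zero_div, zero_add] at hFt_le
    linarith [hFn_nonneg n t]
  · have hi : i ∈ Finset.Ioo 0 (N + 1) := Finset.mem_Ioo.2 ⟨hi0, hiN⟩
    have hQt : Q (i / (N + 1)) ≤ t := (hQ _ (hlevel i hi) t).2 hFt_ge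
    linarith [hn i hi, hFn_mono n hQt]

theorem eventually_le_add_of_tendsto_at_quantiles (hF : ∀ t, F t ∈ Set.Icc 0 1)
    (hFn_le_one : ∀ n t, Fn n t ≤ 1) (hFnGn : ∀ n s t, s < t → Fn n s ≤ Gn n t)
    (hQ : ∀ p ∈ Set.Ioo (0 : ℝ) 1, ∀ t, Q p ≤ t ↔ p ≤ F t)
    (hGQ : ∀ p ∈ Set.Ioo (0 : ℝ) 1, G (Q p) ≤ p)
    (hGn_lim : ∀ p : ℚ, (p : ℝ) ∈ Set.Ioo 0 1 → Tendsto (Gn · (Q p)) atTop (𝓝 (G (Q p))))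
    {ε : ℝ} (hε : 0 < ε) : ∀ᶠ n in atTop, ∀ t, Fn n t ≤ F t + ε := by
  obtain ⟨N, hN⟩ := exists_nat_one_div_lt (by positivity : 0 < ε / 4)
  have hlevel : ∀ i ∈ Finset.Ioo 0 (N + 1), ((i : ℝ) / (N + 1)) ∈ Set.Ioo 0 1 :=
    fun _ hi => cast_div_succ_mem_Ioo hi
  have hgrid : ∀ᶠ n in atTop, ∀ i ∈ Finset.Ioo 0 (N + 1),
      Gn n (Q (i / (N + 1))) < (i : ℝ) / (N + 1) + ε / 2 := by
    refine (eventually_all_finset _).2 fun i hi => ?_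
    have hp := hlevel i hi
    have hlim := hGn_lim (i / (N + 1)) (by push_cast; exact hp)
    push_cast at hlim
    exact hlim.eventually_lt_const (by linarith [hGQ _ hp])
  filter_upwards [hgrid] with n hn t
  obtain ⟨i, -, hFt_ge, hFt_le⟩ := exists_div_le_le_succ_div N.succ_pos (hF t)
  push_cast at hFt_ge hFt_le
  have hstep : (i + 2 : ℝ) / (N + 1) = i / (N + 1) + 2 * (1 / (N + 1)) := by ring
  by_cases hi : i + 2 < N + 1
  · have hi' : i + 2 ∈ Finset.Ioo 0 (N + 1) := Finset.mem_Ioo.2 ⟨by omega, hi⟩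
    have hp : ((i : ℝ) + 2) / (N + 1) ∈ Set.Ioo 0 1 := by exact_mod_cast hlevel _ hi'
    have hFt : F t < (i + 2 : ℝ) / (N + 1) := hFt_le.trans_lt (by gcongr; norm_num)
    have htQ : t < Q ((i + 2 : ℝ) / (N + 1)) :=
      lt_of_not_ge fun h => hFt.not_ge ((hQ _ hp t).1 h)
    have hGn := hn _ hi'
    push_cast at hGn
    linarith [hFnGn n _ _ htQ]
  · have hNi : (N + 1 : ℝ) ≤ i + 2 := by exact_mod_cast not_lt.1 hi
    have : 1 ≤ (i : ℝ) / (N + 1) + 2 * (1 / (N + 1)) := by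
      rw [← hstep, le_div_iff₀ (by positivity)]; linarith
    linarith [hFn_le_one n t]

theorem tendstoUniformly_of_tendsto_at_quantiles (hF : ∀ t, F t ∈ Set.Icc 0 1)
    (hFn : ∀ n t, Fn n t ∈ Set.Icc 0 1) (hFn_mono : ∀ n, Monotone (Fn n))
    (hFnGn : ∀ n s t, s < t → Fn n s ≤ Gn n t)
    (hQ : ∀ p ∈ Set.Ioo (0 : ℝ) 1, ∀ t, Q p ≤ t ↔ p ≤ F t)
    (hGQ : ∀ p ∈ Set.Ioo (0 : ℝ) 1, G (Q p) ≤ p)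
    (hFn_lim : ∀ p : ℚ, (p : ℝ) ∈ Set.Ioo 0 1 → Tendsto (Fn · (Q p)) atTop (𝓝 (F (Q p))))
    (hGn_lim : ∀ p : ℚ, (p : ℝ) ∈ Set.Ioo 0 1 → Tendsto (Gn · (Q p)) atTop (𝓝 (G (Q p)))) :
    TendstoUniformly Fn F atTop := by
  refine Metric.tendstoUniformly_iff.2 fun ε hε => ?_
  filter_upwards [eventually_sub_le_of_tendsto_at_quantiles hF (fun n t => (hFn n t).1) hFn_mono
      hQ hFn_lim (half_pos hε),
    eventually_le_add_of_tendsto_at_quantiles hF (fun n t => (hFn n t).2) hFnGn hQ hGQ hGn_lim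
      (half_pos hε)] with n hlow hup t
  rw [Real.dist_eq, abs_sub_lt_iff]
  constructor <;> linarith [hlow t, hup t]

end Polya

section Quantile

noncomputable def quantile (ν : Measure ℝ) (p : ℝ) : ℝ := sInf {x | p ≤ cdf ν x}

variable {ν : Measure ℝ} {p : ℝ}

theorem quantile_le_iff (hp : p ∈ Set.Ioo 0 1) (t : ℝ) : quantile ν p ≤ t ↔ p ≤ cdf ν t := by
  have hne : {x | p ≤ cdf ν x}.Nonempty :=
    ((tendsto_cdf_atTop ν).eventually (eventually_ge_nhds hp.2)).exists
  have hbdd : BddBelow {x | p ≤ cdf ν x} := by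
    obtain ⟨x₀, hx₀⟩ := ((tendsto_cdf_atBot ν).eventually (eventually_lt_nhds hp.1)).exists
    exact ⟨x₀, fun y hy => le_of_not_gt fun hyx => (hy.trans ((cdf ν).mono hyx.le)).not_gt hx₀⟩
  refine ⟨fun ht => ?_, fun ht => csInf_le hbdd ht⟩
  have hright : ∀ x ∈ Set.Ioi t, p ≤ cdf ν x := fun x hx => by
    obtain ⟨y, hy, hyx⟩ := exists_lt_of_csInf_lt hne (ht.trans_lt hx)
    exact hy.trans ((cdf ν).mono hyx.le)
  exact ge_of_tendsto
    (((cdf ν).right_continuous t).mono_left (nhdsWithin_mono _ Set.Ioi_subset_Ici_self))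
    (eventually_nhdsWithin_of_forall hright)

theorem measureReal_Iio_quantile_le [IsProbabilityMeasure ν] (hp : p ∈ Set.Ioo 0 1) :
    ν.real (Set.Iio (quantile ν p)) ≤ p := by
  have hleft : Function.leftLim (cdf ν) (quantile ν p) ≤ p :=
    le_of_tendsto ((cdf ν).mono.tendsto_leftLim _) <| eventually_nhdsWithin_of_forall
      fun s hs => (not_le.1 fun h => (not_le.2 hs) ((quantile_le_iff hp s).2 h)).le
  have hIio := (cdf ν).measure_Iio (tendsto_cdf_atBot ν) (quantile ν p)
  rw [measure_cdf, sub_zero] at hIio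
  rw [measureReal_def, hIio, ENNReal.toReal_ofReal']
  exact max_le hleft hp.1.le

end Quantile

section Empirical

variable {α : Type*}

noncomputable def empiricalFreq (x : ℕ → α) (n : ℕ) (s : Set α) : ℝ :=
  (∑ j ∈ range n, s.indicator 1 (x j)) / n

theorem empiricalFreq_nonneg (x : ℕ → α) (n : ℕ) (s : Set α) : 0 ≤ empiricalFreq x n s :=
  div_nonneg (sum_nonneg fun _ _ => Set.indicator_nonneg (fun _ _ => zero_le_one) _) n.cast_nonneg

theorem empiricalFreq_le_one (x : ℕ → α) (n : ℕ) (s : Set α) : empiricalFreq x n s ≤ 1 := by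
  refine div_le_one_of_le₀ ?_ n.cast_nonneg
  calc ∑ j ∈ range n, s.indicator 1 (x j) ≤ ∑ _j ∈ range n, (1 : ℝ) :=
        sum_le_sum fun _ _ => Set.indicator_le_self' (fun _ _ => zero_le_one) _
    _ = n := by simp

theorem empiricalFreq_mono (x : ℕ → α) (n : ℕ) {s s' : Set α} (h : s ⊆ s') :
    empiricalFreq x n s ≤ empiricalFreq x n s' :=
  div_le_div_of_nonneg_right (sum_le_sum fun _ _ =>
    Set.indicator_le_indicator_of_subset h (fun _ => zero_le_one) _) n.cast_nonneg

theorem ae_tendsto_empiricalFreq {Ω : Type*} [MeasurableSpace Ω] [MeasurableSpace α] {μ : Measure Ω}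
    [IsFiniteMeasure μ] {X : ℕ → Ω → α} (hX : ∀ j, Measurable (X j))
    (hindep : Pairwise fun i j => X i ⟂ᵢ[μ] X j) (hident : ∀ j, IdentDistrib (X j) (X 0) μ μ)
    {s : Set α} (hs : MeasurableSet s) :
    ∀ᵐ ω ∂μ, Tendsto (fun n => empiricalFreq (X · ω) n s) atTop (𝓝 ((μ.map (X 0)).real s)) := by
  have hφ : Measurable (s.indicator (1 : α → ℝ)) := measurable_one.indicator hs
  have hint : Integrable (s.indicator 1 ∘ X 0) μ :=
    (integrable_const (1 : ℝ)).mono' (hφ.comp (hX 0)).aestronglyMeasurable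
      (ae_of_all _ fun _ => (norm_indicator_le_norm_self _ _).trans (by simp))
  have hmean : μ[s.indicator 1 ∘ X 0] = (μ.map (X 0)).real s := by
    rw [← integral_indicator_one hs, integral_map (hX 0).aemeasurable hφ.aestronglyMeasurable]
    rfl
  have hslln := strong_law_ae_real (fun j => s.indicator 1 ∘ X j) hint
    (fun i j hij => (hindep hij).comp hφ hφ) (fun j => (hident j).comp hφ)
  rw [hmean] at hslln
  exact hslln

end Empirical

theorem ae_tendstoUniformly_empiricalFreq_Iic {Ω : Type*} [MeasurableSpace Ω] {μ : Measure Ω}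
    [IsProbabilityMeasure μ] {X : ℕ → Ω → ℝ} (hX : ∀ j, Measurable (X j))
    (hindep : Pairwise fun i j => X i ⟂ᵢ[μ] X j) (hident : ∀ j, IdentDistrib (X j) (X 0) μ μ) :
    ∀ᵐ ω ∂μ, TendstoUniformly (fun n t => empiricalFreq (X · ω) n (Set.Iic t))
      (cdf (μ.map (X 0))) atTop := by
  set ν := μ.map (X 0)
  have : IsProbabilityMeasure ν := Measure.isProbabilityMeasure_map (hX 0).aemeasurable
  have hlim : ∀ᵐ ω ∂μ, ∀ p : ℚ,
      Tendsto (fun n => empiricalFreq (X · ω) n (Set.Iic (quantile ν p))) atTop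
        (𝓝 (cdf ν (quantile ν p))) ∧
      Tendsto (fun n => empiricalFreq (X · ω) n (Set.Iio (quantile ν p))) atTop
        (𝓝 (ν.real (Set.Iio (quantile ν p)))) := by
    refine ae_all_iff.2 fun p => ?_
    filter_upwards [ae_tendsto_empiricalFreq hX hindep hident measurableSet_Iic,
      ae_tendsto_empiricalFreq hX hindep hident measurableSet_Iio] with ω hIic hIio
    exact ⟨by rwa [cdf_eq_real], hIio⟩
  filter_upwards [hlim] with ω hω
  exact tendstoUniformly_of_tendsto_at_quantiles (G := fun t => ν.real (Set.Iio t))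
    (fun t => ⟨cdf_nonneg ν t, cdf_le_one ν t⟩)
    (fun n t => ⟨empiricalFreq_nonneg _ n _, empiricalFreq_le_one _ n _⟩)
    (fun n _ _ hst => empiricalFreq_mono _ n (Set.Iic_subset_Iic.2 hst))
    (fun n _ _ hst => empiricalFreq_mono _ n (Set.Iic_subset_Iio.2 hst))
    (fun _ hp t => quantile_le_iff hp t) (fun _ hp => measureReal_Iio_quantile_le hp)
    (fun p _ => (hω p).1) (fun p _ => (hω p).2)

theorem identDistrib_of_forall_measureReal_le_eq {Ω : Type*} [MeasurableSpace Ω] {μ : Measure Ω}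
    [IsFiniteMeasure μ] {Y Z : Ω → ℝ} (hY : Measurable Y) (hZ : Measurable Z)
    (h : ∀ x, μ.real {ω | Y ω ≤ x} = μ.real {ω | Z ω ≤ x}) : IdentDistrib Y Z μ μ where
  aemeasurable_fst := hY.aemeasurable
  aemeasurable_snd := hZ.aemeasurable
  map_eq := by
    refine Measure.ext_of_Iic _ _ fun x => ?_
    rw [Measure.map_apply hY measurableSet_Iic, Measure.map_apply hZ measurableSet_Iic]
    exact (ENNReal.toReal_eq_toReal_iff' (measure_ne_top _ _) (measure_ne_top _ _)).1 (h x)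

theorem rss_glivenko_cantelli_general
    {Ω : Type*} [MeasurableSpace Ω] (μ : Measure Ω) [IsProbabilityMeasure μ]
    (k : ℕ)
    (X : Fin k → ℕ → Ω → ℝ) (hXmeas : ∀ r j, Measurable (X r j))
    (hindep : iIndepFun (fun p : Fin k × ℕ => X p.1 p.2) μ)
    (Fr : Fin k → ℝ → ℝ) (hFr : ∀ r j x, Fr r x = (μ {ω | X r j ω ≤ x}).toReal)
    (F : ℝ → ℝ) (hF : ∀ x, F x = (1 / (k : ℝ)) * ∑ r, Fr r x)
    (FRSS : ℕ → ℝ → Ω → ℝ)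
    (hFRSS : ∀ m t ω, FRSS m t ω =
      (1 / ((m : ℝ) * k)) * ∑ r, ∑ j ∈ Finset.range m, (if X r j ω ≤ t then (1 : ℝ) else 0)) :
    ∀ᵐ ω ∂ μ, Tendsto (fun m => ⨆ t : ℝ, |FRSS m t ω - F t|) atTop (nhds 0) := by
  have hident : ∀ r j, IdentDistrib (X r j) (X r 0) μ μ := fun r j =>
    identDistrib_of_forall_measureReal_le_eq (hXmeas r j) (hXmeas r 0) fun x => by
      simp only [measureReal_def, ← hFr]
  have hrow : ∀ r, ∀ᵐ ω ∂μ, TendstoUniformly (fun m t => empiricalFreq (X r · ω) m (Set.Iic t))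
      (cdf (μ.map (X r 0))) atTop := fun r =>
    ae_tendstoUniformly_empiricalFreq_Iic (hXmeas r)
      (fun i j hij => hindep.indepFun (show (r, i) ≠ (r, j) by simp [hij])) (hident r)
  have hFr_cdf : ∀ r x, Fr r x = cdf (μ.map (X r 0)) x := fun r x => by
    have := Measure.isProbabilityMeasure_map (μ := μ) (hXmeas r 0).aemeasurable
    rw [hFr r 0 x, cdf_eq_real, map_measureReal_apply (hXmeas r 0) measurableSet_Iic]
    rfl
  have hFRSS_avg : ∀ m t ω,
      FRSS m t ω = (1 / k) * ∑ r, empiricalFreq (X r · ω) m (Set.Iic t) := fun m t ω => by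
    rw [hFRSS, mul_sum, mul_sum]
    refine sum_congr rfl fun r _ => ?_
    simp only [empiricalFreq, Set.indicator_apply, Set.mem_Iic, Pi.one_apply]
    ring
  filter_upwards [ae_all_iff.2 hrow] with ω hω
  have havg := (tendstoUniformly_finset_sum univ fun r _ => hω r).const_mul (1 / k)
  simp only [← hFr_cdf, ← hF, ← hFRSS_avg] at havg
  exact havg.tendsto_iSup_abs_sub

/-- Fix an integer `k ≥ 1` and CDFs `F_[1], …, F_[k]` with
`F = (1/k) ∑_{r=1}^{k} F_[r]`.  Let `{X_[r]j : r = 1, …, k; j ∈ ℕ}` be mutually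
independent random variables with `X_[r]j` having CDF `F_[r]` for every `j`, and let
`F_RSS,m t = (1/(mk)) ∑_{r=1}^{k} ∑_{j=1}^{m} 1{X_[r]j ≤ t}` be the RSS empirical
distribution function.  Then almost surely
`sup_{t ∈ ℝ} |F_RSS,m t - F t| → 0` as `m → ∞`. -/
theorem rss_glivenko_cantelli
    {Ω : Type*} [MeasurableSpace Ω] (μ : Measure Ω) [IsProbabilityMeasure μ]
    (k : ℕ) (hk : 1 ≤ k)
    (X : Fin k → ℕ → Ω → ℝ) (hXmeas : ∀ r j, Measurable (X r j))
    (hindep : iIndepFun (fun p : Fin k × ℕ => X p.1 p.2) μ)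
    (Fr : Fin k → ℝ → ℝ) (hFr : ∀ r j x, Fr r x = (μ {ω | X r j ω ≤ x}).toReal)
    (F : ℝ → ℝ) (hF : ∀ x, F x = (1 / (k : ℝ)) * ∑ r, Fr r x)
    (FRSS : ℕ → ℝ → Ω → ℝ)
    (hFRSS : ∀ m t ω, FRSS m t ω =
      (1 / ((m : ℝ) * k)) * ∑ r, ∑ j ∈ Finset.range m, (if X r j ω ≤ t then (1 : ℝ) else 0)) :
    ∀ᵐ ω ∂ μ, Tendsto (fun m => ⨆ t : ℝ, |FRSS m t ω - F t|) atTop (nhds 0) :=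
  rss_glivenko_cantelli_general μ k X hXmeas hindep Fr hFr F hF FRSS hFRSS
end

section
/- (Theorem 1, strong uniform consistency.) Fix an integer k ≥ 1 and CDFs F_[1],…,F_[k] of nonnegative random variables with F = (1/k) Σ_{r=1}^{k} F_[r] continuous, and fix 0 < τ < T < ∞ with F(τ) > 0 and F_[r](τ) > 0 for all r. Let {X_[r]j : r = 1,…,k; j ∈ ℕ} be mutually independent nonnegative random variables with X_[r]j having CDF F_[r] for every j. For m ∈ ℕ define K_RSS,m(t) = [Σ_{r=1}^{k} Σ_{j=1}^{m} (t − X_[r]j) 1{X_[r]j ≤ t}] / [Σ_{r=1}^{k} Σ_{j=1}^{m} 1{X_[r]j ≤ t}] (taken to be 0 when the denominator vanishes), and let K(t) = (∫₀ᵗ F(x)dx)/F(t). Then almost surely sup_{τ ≤ t ≤ T} |K_RSS,m(t) − K(t)| → 0 as m → ∞. -/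
/-!
Write `K_RSS,m(t) = N_m(t) / D_m(t)`, where `D_m(t)` and `N_m(t)` are the averages of
`1{X ≤ t}` and `(t - X)⁺` over the `k m` observations. Applied row by row, the strong law gives
`D_m(q) → F(q)` and `N_m(q) → E (q - X)⁺ = ∫₀^q F` almost surely, simultaneously for all
positive rationals `q`. Both `D_m` and `N_m` are monotone in `t` and their limits are continuous,
so Pólya's argument makes the convergence uniform on `[τ, T]`; as `F ≥ F(τ) > 0` there, the
ratio converges uniformly as well.
-/

open MeasureTheory ProbabilityTheory Filter Finset
open scoped Topology

theorem Monotone.abs_sub_lt_two_mul {f g : ℝ → ℝ} (hf : Monotone f) {u v t ε : ℝ}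
    (hut : u ≤ t) (htv : t ≤ v) (hfu : |f u - g u| < ε) (hfv : |f v - g v| < ε)
    (hgu : |g u - g t| < ε) (hgv : |g v - g t| < ε) : |f t - g t| < 2 * ε := by
  have := hf hut
  have := hf htv
  rw [abs_lt] at *
  constructor <;> linarith

theorem exists_rat_bracket_of_continuousAt {g : ℝ → ℝ} {c t ε : ℝ} (hg : ContinuousAt g t)
    (hct : c < t) (hε : 0 < ε) :
    ∃ u v : ℚ, c < u ∧ (u : ℝ) < t ∧ t < v ∧ ∀ y ∈ Set.Icc (u : ℝ) v, |g y - g t| < ε := by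
  obtain ⟨δ, hδ, hgδ⟩ := Metric.continuousAt_iff.1 hg ε hε
  obtain ⟨u, hu₁, hu₂⟩ := exists_rat_btwn (max_lt (sub_lt_self t hδ) hct)
  obtain ⟨v, hv₁, hv₂⟩ := exists_rat_btwn (lt_add_of_pos_right t hδ)
  rw [max_lt_iff] at hu₁
  refine ⟨u, v, hu₁.2, hu₂, hv₁, fun y hy => hgδ ?_⟩
  rw [Real.dist_eq, abs_sub_lt_iff]
  constructor <;> linarith [hy.1, hy.2]

theorem tendstoUniformlyOn_Icc_of_monotone_of_tendsto_rat {ι : Type*} {l : Filter ι}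
    {f : ι → ℝ → ℝ} {g : ℝ → ℝ} (hf : ∀ i, Monotone (f i)) (hg : Continuous g) {c a b : ℝ}
    (hca : c < a) (hconv : ∀ q : ℚ, c < q → Tendsto (fun i => f i q) l (𝓝 (g q))) :
    TendstoUniformlyOn f g l (Set.Icc a b) := by
  rw [Metric.tendstoUniformlyOn_iff]
  intro ε hε
  have hε4 : 0 < ε / 4 := by positivity
  choose! u v hcu hut htv hg_near using fun t (hct : c < t) =>
    exists_rat_bracket_of_continuousAt hg.continuousAt hct hε4
  have hc : ∀ t ∈ Set.Icc a b, c < t := fun t ht => hca.trans_le ht.1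
  obtain ⟨s, hs, hcover⟩ := isCompact_Icc.elim_nhds_subcover
    (fun t => Set.Ioo (u t : ℝ) (v t)) fun t ht => Ioo_mem_nhds (hut t (hc t ht)) (htv t (hc t ht))
  have hev : ∀ᶠ i in l, ∀ x ∈ s, |f i (u x) - g (u x)| < ε / 2 ∧ |f i (v x) - g (v x)| < ε / 2 := by
    refine (eventually_all_finset s).2 fun x hx => ?_
    have hcx := hc x (hs x hx)
    filter_upwards [(hconv _ (hcu x hcx)).eventually (Metric.ball_mem_nhds _ (half_pos hε)),
      (hconv _ (hcx.trans (htv x hcx))).eventually (Metric.ball_mem_nhds _ (half_pos hε))]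
      with i hu hv using ⟨hu, hv⟩
  filter_upwards [hev] with i hi t ht
  obtain ⟨x, hxs, hut', htv'⟩ := Set.mem_iUnion₂.1 (hcover ht)
  have hcx := hc x (hs x hxs)
  have hux := (hut x hcx).le
  have hxv := (htv x hcx).le
  have hgt := hg_near x hcx t ⟨hut'.le, htv'.le⟩
  have hgu := hg_near x hcx (u x) ⟨le_rfl, hux.trans hxv⟩
  have hgv := hg_near x hcx (v x) ⟨hux.trans hxv, le_rfl⟩
  have key := (hf i).abs_sub_lt_two_mul hut'.le htv'.le (hi x hxs).1 (hi x hxs).2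
    (by linarith [abs_sub_le (g (u x)) (g x) (g t), abs_sub_comm (g x) (g t)])
    (by linarith [abs_sub_le (g (v x)) (g x) (g t), abs_sub_comm (g x) (g t)])
  rw [Real.dist_eq, abs_sub_comm]
  linarith

theorem TendstoUniformlyOn.div_of_bounded_of_le {α ι : Type*} {l : Filter ι} {s : Set α}
    {f g : ι → α → ℝ} {F G : α → ℝ} (hf : TendstoUniformlyOn f F l s)
    (hg : TendstoUniformlyOn g G l s) {B c : ℝ} (hF : ∀ t ∈ s, |F t| ≤ B) (hc : 0 < c)
    (hG : ∀ t ∈ s, c ≤ G t) :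
    TendstoUniformlyOn (fun i t => f i t / g i t) (fun t => F t / G t) l s := by
  rw [Metric.tendstoUniformlyOn_iff] at *
  intro ε hε
  have hcB : 0 < c + |B| := by positivity
  set η := min (c / 2) (ε * c ^ 2 / (4 * (c + |B|)))
  have hη₀ : 0 < η := by positivity
  have hη₁ : η ≤ c / 2 := min_le_left _ _
  have hη₂ : η ≤ ε * c ^ 2 / (4 * (c + |B|)) := min_le_right _ _
  filter_upwards [hf η hη₀, hg η hη₀] with i hfi hgi t ht
  have hfF : |f i t - F t| < η := by rw [← Real.dist_eq, dist_comm]; exact hfi t ht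
  have hgG : |G t - g i t| < η := by rw [← Real.dist_eq]; exact hgi t ht
  have hGt := hG t ht
  have hgt : c / 2 ≤ g i t := by linarith [(abs_lt.1 hgG).2]
  have hFt : |F t| ≤ |B| := (hF t ht).trans (le_abs_self B)
  have hgpos : 0 < g i t := by linarith
  have hGpos : 0 < G t := by linarith
  have hsplit : F t / G t - f i t / g i t
      = -((f i t - F t) / g i t + F t * (G t - g i t) / (g i t * G t)) := by
    field_simp [hgpos.ne', hGpos.ne']
    ring
  rw [Real.dist_eq, hsplit, abs_neg]
  calc |(f i t - F t) / g i t + F t * (G t - g i t) / (g i t * G t)|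
      ≤ |f i t - F t| / g i t + |F t| * |G t - g i t| / (g i t * G t) := by
        refine (abs_add_le _ _).trans_eq ?_
        rw [abs_div, abs_div, abs_mul, abs_mul, abs_of_pos hgpos, abs_of_pos hGpos]
    _ ≤ η / (c / 2) + |B| * η / (c / 2 * c) := by gcongr
    _ = 2 * η * (c + |B|) / c ^ 2 := by field_simp
    _ ≤ 2 * (ε * c ^ 2 / (4 * (c + |B|))) * (c + |B|) / c ^ 2 := by gcongr
    _ < ε := by field_simp; linarith

theorem TendstoUniformlyOn.tendsto_iSup_abs_sub {α ι : Type*} {l : Filter ι} {s : Set α}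
    {f : ι → α → ℝ} {g : α → ℝ} (h : TendstoUniformlyOn f g l s) :
    Tendsto (fun i => ⨆ t : s, |f i t - g t|) l (𝓝 0) := by
  rw [Metric.tendstoUniformlyOn_iff] at h
  rw [Metric.tendsto_nhds]
  intro ε hε
  filter_upwards [h (ε / 2) (half_pos hε)] with i hi
  have hsup : (⨆ t : s, |f i t - g t|) ≤ ε / 2 := Real.iSup_le
    (fun t => by rw [abs_sub_comm, ← Real.dist_eq]; exact (hi t t.2).le) (half_pos hε).le
  rw [Real.dist_eq, sub_zero, abs_of_nonneg (Real.iSup_nonneg fun _ => abs_nonneg _)]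
  linarith

theorem identDistrib_of_measureReal_le_eq {Ω Ω' : Type*} [MeasurableSpace Ω] [MeasurableSpace Ω']
    {μ : Measure Ω} {ν : Measure Ω'} [IsFiniteMeasure μ] [IsFiniteMeasure ν]
    {X : Ω → ℝ} {Y : Ω' → ℝ} (hX : Measurable X) (hY : Measurable Y)
    (h : ∀ x, μ.real {ω | X ω ≤ x} = ν.real {ω | Y ω ≤ x}) : IdentDistrib X Y μ ν := by
  refine ⟨hX.aemeasurable, hY.aemeasurable, Measure.ext_of_Iic _ _ fun x => ?_⟩
  rw [Measure.map_apply hX measurableSet_Iic, Measure.map_apply hY measurableSet_Iic]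
  exact (measureReal_eq_measureReal_iff (measure_ne_top _ _) (measure_ne_top _ _)).1 (h x)

section

variable {Ω : Type*} [MeasurableSpace Ω] {μ : Measure Ω}

theorem monotone_measureReal_setOf_le [IsFiniteMeasure μ] (X : Ω → ℝ) :
    Monotone fun t => μ.real {ω | X ω ≤ t} :=
  fun _ _ hst => measureReal_mono fun _ hω => le_trans hω hst

theorem integral_ite_le_eq_measureReal {X : Ω → ℝ} (hX : Measurable X) (t : ℝ) :
    ∫ ω, (if X ω ≤ t then (1 : ℝ) else 0) ∂μ = μ.real {ω | X ω ≤ t} :=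
  integral_indicator_one (hX measurableSet_Iic)

theorem integrable_max_sub_of_nonneg [IsFiniteMeasure μ] {X : Ω → ℝ} (hX : AEMeasurable X μ)
    (hXnn : ∀ᵐ ω ∂μ, 0 ≤ X ω) (t : ℝ) :
    Integrable (fun ω => max (t - X ω) 0) μ := by
  refine .of_bound (((hX.const_sub t).max aemeasurable_const).aestronglyMeasurable) (max t 0) ?_
  filter_upwards [hXnn] with ω hω
  rw [Real.norm_of_nonneg (le_max_right _ _)]
  exact max_le_max (by linarith) le_rfl

theorem integral_max_sub_eq_intervalIntegral [IsFiniteMeasure μ] {X : Ω → ℝ}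
    (hX : AEMeasurable X μ) (hXnn : ∀ᵐ ω ∂μ, 0 ≤ X ω) {t : ℝ} (ht : 0 ≤ t) :
    ∫ ω, max (t - X ω) 0 ∂μ = ∫ s in 0..t, μ.real {ω | X ω ≤ s} := by
  have hbound : ∀ᵐ ω ∂μ, max (t - X ω) 0 ≤ t := by
    filter_upwards [hXnn] with ω hω using max_le (by linarith) ht
  -- the layer-cake formula, followed by the substitution `s ↦ t - s`
  rw [(integrable_max_sub_of_nonneg hX hXnn t).integral_eq_integral_Ioc_meas_le
    (ae_of_all _ fun _ => le_max_right _ _) hbound, ← intervalIntegral.integral_of_le ht]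
  have hlevel : ∀ s ∈ Set.uIoc 0 t,
      μ.real {ω | s ≤ max (t - X ω) 0} = μ.real {ω | X ω ≤ t - s} := by
    intro s hs
    rw [Set.uIoc_of_le ht] at hs
    congr 1
    ext ω
    simp only [Set.mem_ofPred_eq, le_max_iff, not_le.2 hs.1, or_false]
    constructor <;> intro h <;> linarith
  rw [intervalIntegral.integral_congr_ae (ae_of_all _ hlevel),
    intervalIntegral.integral_comp_sub_left (fun s => μ.real {ω | X ω ≤ s}) t]
  simp

end

section StratifiedMean

variable {ι Ω : Type*} [Fintype ι]

noncomputable def stratifiedMean (X : ι → ℕ → Ω → ℝ) (φ : ℝ → ℝ) (m : ℕ) (ω : Ω) : ℝ :=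
  (∑ r, ∑ j ∈ range m, φ (X r j ω)) / (Fintype.card ι * m)

theorem stratifiedMean_div_stratifiedMean (X : ι → ℕ → Ω → ℝ) (φ ψ : ℝ → ℝ) (m : ℕ) (ω : Ω) :
    stratifiedMean X φ m ω / stratifiedMean X ψ m ω
      = (∑ r, ∑ j ∈ range m, φ (X r j ω)) / (∑ r, ∑ j ∈ range m, ψ (X r j ω)) := by
  unfold stratifiedMean
  rcases eq_or_ne ((Fintype.card ι : ℝ) * m) 0 with h | h
  · rcases mul_eq_zero.1 h with h | h
    · have : IsEmpty ι := Fintype.card_eq_zero_iff.1 (by exact_mod_cast h)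
      simp
    · simp [Nat.cast_eq_zero.1 h]
  · exact div_div_div_cancel_right₀ h _ _

theorem monotone_stratifiedMean (X : ι → ℕ → Ω → ℝ) {φ : ℝ → ℝ → ℝ}
    (hφ : ∀ x, Monotone fun t => φ t x) (m : ℕ) (ω : Ω) :
    Monotone fun t => stratifiedMean X (φ t) m ω := fun _ _ hst =>
  div_le_div_of_nonneg_right (sum_le_sum fun _ _ => sum_le_sum fun _ _ => hφ _ hst)
    (by positivity)

theorem stratifiedMean_max_sub_div_stratifiedMean_le (X : ι → ℕ → Ω → ℝ) (t : ℝ) (m : ℕ)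
    (ω : Ω) :
    stratifiedMean X (fun x => max (t - x) 0) m ω
        / stratifiedMean X (fun x => if x ≤ t then 1 else 0) m ω
      = if 0 < ∑ r, ∑ j ∈ range m, (if X r j ω ≤ t then (1 : ℝ) else 0) then
          (∑ r, ∑ j ∈ range m, (t - X r j ω) * (if X r j ω ≤ t then (1 : ℝ) else 0))
            / (∑ r, ∑ j ∈ range m, (if X r j ω ≤ t then (1 : ℝ) else 0))
        else 0 := by
  have hterm : ∀ x, (t - x) * (if x ≤ t then (1 : ℝ) else 0) = max (t - x) 0 := fun x => by
    by_cases h : x ≤ t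
    · simp [h]
    · simp [h, (not_le.1 h).le]
  rw [stratifiedMean_div_stratifiedMean]
  simp only [hterm]
  split_ifs with hpos
  · rfl
  · rw [le_antisymm (not_lt.1 hpos) (by positivity), div_zero]

theorem tendstoUniformlyOn_stratifiedMean_div {X : ι → ℕ → Ω → ℝ} {ω : Ω} {F I : ℝ → ℝ}
    (hFcont : Continuous F) (hIcont : Continuous I) (hFmono : Monotone F) {c τ T : ℝ}
    (hcτ : c < τ) (hFτ : 0 < F τ)
    (hD : ∀ q : ℚ, c < q → Tendsto
      (fun m => stratifiedMean X (fun x => if x ≤ (q : ℝ) then 1 else 0) m ω) atTop (𝓝 (F q)))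
    (hN : ∀ q : ℚ, c < q → Tendsto
      (fun m => stratifiedMean X (fun x => max ((q : ℝ) - x) 0) m ω) atTop (𝓝 (I q))) :
    TendstoUniformlyOn
      (fun m t => stratifiedMean X (fun x => max (t - x) 0) m ω
        / stratifiedMean X (fun x => if x ≤ t then 1 else 0) m ω)
      (fun t => I t / F t) atTop (Set.Icc τ T) := by
  have hind_mono : ∀ x : ℝ, Monotone fun t => if x ≤ t then (1 : ℝ) else 0 := fun x s t hst => by
    by_cases hs : x ≤ s
    · simp [hs, hs.trans hst]
    · by_cases ht : x ≤ t <;> simp [hs, ht]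
  have hD' : TendstoUniformlyOn
      (fun m t => stratifiedMean X (fun x => if x ≤ t then 1 else 0) m ω) F atTop
      (Set.Icc τ T) :=
    tendstoUniformlyOn_Icc_of_monotone_of_tendsto_rat
      (monotone_stratifiedMean X hind_mono · ω) hFcont hcτ hD
  have hN' : TendstoUniformlyOn
      (fun m t => stratifiedMean X (fun x => max (t - x) 0) m ω) I atTop (Set.Icc τ T) :=
    tendstoUniformlyOn_Icc_of_monotone_of_tendsto_rat
      (monotone_stratifiedMean X (fun x s t hst => max_le_max (by linarith) le_rfl) · ω) hIcont
      hcτ hN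
  obtain ⟨B, hB⟩ :=
    isCompact_Icc.exists_bound_of_continuousOn (s := Set.Icc τ T) hIcont.continuousOn
  exact hN'.div_of_bounded_of_le hD' hB hFτ fun t ht => hFmono ht.1

variable [MeasurableSpace Ω]

-- The paper's `F = k⁻¹ ∑ F_[r]`, each `F_[r]` read off the first cycle.
noncomputable def stratifiedCDF (μ : Measure Ω) (X : ι → ℕ → Ω → ℝ) (t : ℝ) : ℝ :=
  (Fintype.card ι : ℝ)⁻¹ * ∑ r, μ.real {ω | X r 0 ω ≤ t}

variable {μ : Measure Ω}

theorem monotone_stratifiedCDF [IsFiniteMeasure μ] (X : ι → ℕ → Ω → ℝ) :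
    Monotone (stratifiedCDF μ X) := fun s t hst => by
  unfold stratifiedCDF
  exact mul_le_mul_of_nonneg_left
    (sum_le_sum fun r _ => monotone_measureReal_setOf_le (X r 0) hst) (by positivity)

theorem ae_tendsto_stratifiedMean {X : ι → ℕ → Ω → ℝ}
    (hindep : iIndepFun (fun p : ι × ℕ => X p.1 p.2) μ)
    (hident : ∀ r j, IdentDistrib (X r j) (X r 0) μ μ) {φ : ℝ → ℝ} (hφ : Measurable φ)
    (hint : ∀ r, Integrable (fun ω => φ (X r 0 ω)) μ) :
    ∀ᵐ ω ∂μ, Tendsto (fun m => stratifiedMean X φ m ω) atTop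
      (𝓝 ((Fintype.card ι : ℝ)⁻¹ * ∑ r, ∫ ω, φ (X r 0 ω) ∂μ)) := by
  have hrow : ∀ r, ∀ᵐ ω ∂μ, Tendsto (fun m : ℕ => (∑ j ∈ range m, φ (X r j ω)) / m) atTop
      (𝓝 (∫ ω, φ (X r 0 ω) ∂μ)) := fun r =>
    strong_law_ae_real (fun j ω => φ (X r j ω)) (hint r)
      (fun i j hij => (hindep.indepFun (i := (r, i)) (j := (r, j)) (by simpa using hij)).comp hφ hφ)
      (fun j => (hident r j).comp hφ)
  filter_upwards [ae_all_iff.2 hrow] with ω hω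
  refine ((tendsto_finsetSum univ fun r _ => hω r).const_mul _).congr fun m => ?_
  simp only [stratifiedMean, Finset.mul_sum, Finset.sum_div]
  exact sum_congr rfl fun r _ => sum_congr rfl fun j _ => by ring

theorem ae_tendsto_stratifiedMean_le [IsFiniteMeasure μ] {X : ι → ℕ → Ω → ℝ}
    (hindep : iIndepFun (fun p : ι × ℕ => X p.1 p.2) μ)
    (hident : ∀ r j, IdentDistrib (X r j) (X r 0) μ μ) (hX : ∀ r, Measurable (X r 0)) (t : ℝ) :
    ∀ᵐ ω ∂μ, Tendsto (fun m => stratifiedMean X (fun x => if x ≤ t then 1 else 0) m ω) atTop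
      (𝓝 (stratifiedCDF μ X t)) := by
  have hφ : Measurable fun x : ℝ => if x ≤ t then (1 : ℝ) else 0 :=
    measurable_const.ite measurableSet_Iic measurable_const
  have key := ae_tendsto_stratifiedMean hindep hident hφ fun r =>
    .of_bound (hφ.comp (hX r)).aestronglyMeasurable 1
      (ae_of_all _ fun ω => by by_cases h : X r 0 ω ≤ t <;> simp [h])
  simp only [fun r => integral_ite_le_eq_measureReal (μ := μ) (hX r) t] at key
  exact key

theorem ae_tendsto_stratifiedMean_max_sub [IsFiniteMeasure μ] {X : ι → ℕ → Ω → ℝ}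
    (hindep : iIndepFun (fun p : ι × ℕ => X p.1 p.2) μ)
    (hident : ∀ r j, IdentDistrib (X r j) (X r 0) μ μ) (hX : ∀ r, Measurable (X r 0))
    (hXnn : ∀ r, ∀ᵐ ω ∂μ, 0 ≤ X r 0 ω) {t : ℝ} (ht : 0 ≤ t) :
    ∀ᵐ ω ∂μ, Tendsto (fun m => stratifiedMean X (fun x => max (t - x) 0) m ω) atTop
      (𝓝 (∫ s in (0 : ℝ)..t, stratifiedCDF μ X s)) := by
  have key := ae_tendsto_stratifiedMean hindep hident
    ((measurable_const.sub measurable_id).max measurable_const) fun r =>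
      integrable_max_sub_of_nonneg (hX r).aemeasurable (hXnn r) t
  have hlim : ∫ s in (0 : ℝ)..t, stratifiedCDF μ X s
      = (Fintype.card ι : ℝ)⁻¹ * ∑ r, ∫ ω, max (t - X r 0 ω) 0 ∂μ := by
    simp only [stratifiedCDF, intervalIntegral.integral_const_mul,
      intervalIntegral.integral_finsetSum fun r _ =>
        (monotone_measureReal_setOf_le (μ := μ) (X r 0)).intervalIntegrable,
      integral_max_sub_eq_intervalIntegral (hX _).aemeasurable (hXnn _) ht]
  rwa [hlim]

end StratifiedMean

theorem K_RSS_strong_uniform_consistency_general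
    {Ω : Type*} [MeasurableSpace Ω] (μ : Measure Ω) [IsProbabilityMeasure μ]
    (k : ℕ)
    (X : Fin k → ℕ → Ω → ℝ) (hXmeas : ∀ r j, Measurable (X r j))
    (hXnn : ∀ r j ω, 0 ≤ X r j ω)
    (hindep : iIndepFun (fun p : Fin k × ℕ => X p.1 p.2) μ)
    (Fr : Fin k → ℝ → ℝ) (hFr : ∀ r j x, Fr r x = (μ {ω | X r j ω ≤ x}).toReal)
    (F : ℝ → ℝ) (hF : ∀ x, F x = (1 / (k : ℝ)) * ∑ r, Fr r x)
    (hFcont : Continuous F)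
    (τ T : ℝ) (hτ : 0 < τ)
    (hFτ : 0 < F τ)
    (KRSS : ℕ → ℝ → Ω → ℝ)
    (hKRSS : ∀ m t ω, KRSS m t ω =
      if 0 < ∑ r, ∑ j ∈ Finset.range m, (if X r j ω ≤ t then (1 : ℝ) else 0) then
        (∑ r, ∑ j ∈ Finset.range m, (t - X r j ω) * (if X r j ω ≤ t then (1 : ℝ) else 0))
          / (∑ r, ∑ j ∈ Finset.range m, (if X r j ω ≤ t then (1 : ℝ) else 0))
      else 0)
    (K : ℝ → ℝ) (hK : ∀ t, K t = (∫ x in (0:ℝ)..t, F x) / F t) :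
    ∀ᵐ ω ∂ μ,
      Tendsto (fun m => ⨆ t : Set.Icc τ T, |KRSS m t ω - K t|) atTop (nhds 0) := by
  obtain rfl : F = stratifiedCDF μ X := funext fun x => by
    simp [stratifiedCDF, hF, hFr _ 0, measureReal_def]
  obtain rfl : K = fun t => (∫ x in (0 : ℝ)..t, stratifiedCDF μ X x) / stratifiedCDF μ X t :=
    funext hK
  have hident : ∀ r j, IdentDistrib (X r j) (X r 0) μ μ := fun r j =>
    identDistrib_of_measureReal_le_eq (hXmeas r j) (hXmeas r 0) fun x =>
      (hFr r j x).symm.trans (hFr r 0 x)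
  have hAE : ∀ᵐ ω ∂μ, ∀ q ∈ {q : ℚ | 0 < (q : ℝ)},
      Tendsto (fun m => stratifiedMean X (fun x => if x ≤ (q : ℝ) then 1 else 0) m ω) atTop
        (𝓝 (stratifiedCDF μ X q)) ∧
      Tendsto (fun m => stratifiedMean X (fun x => max ((q : ℝ) - x) 0) m ω) atTop
        (𝓝 (∫ s in (0 : ℝ)..q, stratifiedCDF μ X s)) :=
    (ae_ball_iff (Set.to_countable _)).2 fun q hq =>
      (ae_tendsto_stratifiedMean_le hindep hident (hXmeas · 0) q).and
        (ae_tendsto_stratifiedMean_max_sub hindep hident (hXmeas · 0)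
          (fun r => ae_of_all _ (hXnn r 0)) (le_of_lt hq))
  filter_upwards [hAE] with ω hω
  have hIcont : Continuous fun t => ∫ s in (0 : ℝ)..t, stratifiedCDF μ X s :=
    intervalIntegral.continuous_primitive
      (fun _ _ => (monotone_stratifiedCDF X).intervalIntegrable) 0
  have hconv := tendstoUniformlyOn_stratifiedMean_div (T := T) hFcont hIcont
    (monotone_stratifiedCDF X) hτ hFτ (fun q hq => (hω q hq).1) (fun q hq => (hω q hq).2)
  have hKRSS_unif : TendstoUniformlyOn (fun m t => KRSS m t ω)
      (fun t => (∫ x in (0 : ℝ)..t, stratifiedCDF μ X x) / stratifiedCDF μ X t) atTop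
      (Set.Icc τ T) :=
    hconv.congr <| Eventually.of_forall fun m t _ =>
      (stratifiedMean_max_sub_div_stratifiedMean_le X t m ω).trans (hKRSS m t ω).symm
  exact hKRSS_unif.tendsto_iSup_abs_sub

/-- (Theorem 1, strong uniform consistency.)  Fix an integer `k ≥ 1` and CDFs
`F_[1], …, F_[k]` of nonnegative random variables with `F = (1/k) ∑_{r=1}^{k} F_[r]`
continuous, and fix `0 < τ < T < ∞` with `F τ > 0` and `F_[r] τ > 0` for all `r`.
Let `{X_[r]j : r = 1, …, k; j ∈ ℕ}` be mutually independent nonnegative random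
variables with `X_[r]j` having CDF `F_[r]` for every `j`.  For `m ∈ ℕ` define
`K_RSS,m t = (∑_r ∑_{j<m} (t - X_[r]j) 1{X_[r]j ≤ t}) / (∑_r ∑_{j<m} 1{X_[r]j ≤ t})`
(taken to be `0` when the denominator vanishes), and let `K t = (∫₀ᵗ F)/(F t)`.
Then almost surely `sup_{τ ≤ t ≤ T} |K_RSS,m t - K t| → 0` as `m → ∞`. -/
theorem K_RSS_strong_uniform_consistency
    {Ω : Type*} [MeasurableSpace Ω] (μ : Measure Ω) [IsProbabilityMeasure μ]
    (k : ℕ) (hk : 1 ≤ k)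
    (X : Fin k → ℕ → Ω → ℝ) (hXmeas : ∀ r j, Measurable (X r j))
    (hXnn : ∀ r j ω, 0 ≤ X r j ω)
    (hindep : iIndepFun (fun p : Fin k × ℕ => X p.1 p.2) μ)
    (Fr : Fin k → ℝ → ℝ) (hFr : ∀ r j x, Fr r x = (μ {ω | X r j ω ≤ x}).toReal)
    (F : ℝ → ℝ) (hF : ∀ x, F x = (1 / (k : ℝ)) * ∑ r, Fr r x)
    (hFcont : Continuous F)
    (τ T : ℝ) (hτ : 0 < τ) (hτT : τ < T)
    (hFτ : 0 < F τ) (hFrτ : ∀ r, 0 < Fr r τ)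
    (KRSS : ℕ → ℝ → Ω → ℝ)
    (hKRSS : ∀ m t ω, KRSS m t ω =
      if 0 < ∑ r, ∑ j ∈ Finset.range m, (if X r j ω ≤ t then (1 : ℝ) else 0) then
        (∑ r, ∑ j ∈ Finset.range m, (t - X r j ω) * (if X r j ω ≤ t then (1 : ℝ) else 0))
          / (∑ r, ∑ j ∈ Finset.range m, (if X r j ω ≤ t then (1 : ℝ) else 0))
      else 0)
    (K : ℝ → ℝ) (hK : ∀ t, K t = (∫ x in (0:ℝ)..t, F x) / F t) :
    ∀ᵐ ω ∂ μ,
      Tendsto (fun m => ⨆ t : Set.Icc τ T, |KRSS m t ω - K t|) atTop (nhds 0) :=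
  K_RSS_strong_uniform_consistency_general μ k X hXmeas hXnn hindep Fr hFr F hF hFcont τ T hτ hFτ
    KRSS hKRSS K hK
end
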